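/- arXiv:2011.01448 — 10 statements merged into one kernel-verified Lean document; each statement's English description precedes it below -/
import Mathlib

section
/- Let k be a commutative ring, let n be a positive natural number, and let R be a k-algebra generated as a k-algebra by n elements r_1, ..., r_n. Then the algebra of (n+2) × (n+2) matrices over R is generated as a k-algebra by two elements. (One may take one generator to be the permutation matrix cyclically permuting the n+2 coordinates, and the other to be the matrix whose first row is (0, r_1, ..., r_n, 0), whose second row is (1, 0, ..., 0), and whose remaining rows are zero.) -/
/-! Let `P` be the cyclic permutation matrix and `b = E₁₀ + e₀ vᵀ` with `v = (0, r, 0)`.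
Then `P * b = E₀₀ + e_last vᵀ`, whose square is `E₀₀` because `v` vanishes at `0` and at the
last index (this is where the two extra rows are needed). Multiplying `E₀₀` on both sides by
powers of `P` gives every matrix unit `Eᵢⱼ`, and a subalgebra containing all matrix units is
`M(T)` for the subalgebra `T` of `R` generated by the entries of its elements; here the
entries of `b` already contain every `rⱼ`. -/

open Matrix Equiv

namespace Matrix

variable {k R ι : Type*} [CommRing k] [Ring R] [Algebra k R] [Fintype ι] [DecidableEq ι]

theorem subalgebra_eq_top_of_single_one_mem {s : Set R} (hs : Algebra.adjoin k s = ⊤)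
    (S : Subalgebra k (Matrix ι ι R)) (hunit : ∀ i j, single i j (1 : R) ∈ S)
    (hentry : ∀ x ∈ s, ∃ M ∈ S, ∃ p q, M p q = x) : S = ⊤ := by
  have hsingle (x : R) : ∀ i j, single i j x ∈ S := by
    induction (hs ▸ Algebra.mem_top : x ∈ Algebra.adjoin k s) using Algebra.adjoin_induction with
    | mem x hx =>
      obtain ⟨M, hM, p, q, rfl⟩ := hentry x hx
      intro i j
      simpa using S.mul_mem (S.mul_mem (hunit i p) hM) (hunit q j)
    | algebraMap c =>
      intro i j
      simpa [Algebra.algebraMap_eq_smul_one, smul_single] using S.smul_mem (hunit i j) c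
    | add x y _ _ hx hy => exact fun i j ↦ single_add i j x y ▸ S.add_mem (hx i j) (hy i j)
    | mul x y _ _ hx hy =>
      exact fun i j ↦ single_mul_single_same x i j j y ▸ S.mul_mem (hx i j) (hy j j)
  refine eq_top_iff.2 fun M _ ↦ ?_
  rw [matrix_eq_sum_single M]
  exact S.sum_mem fun i _ ↦ S.sum_mem fun j _ ↦ hsingle _ i j

theorem permMatrix_pow (σ : Perm ι) (s : ℕ) :
    (σ ^ s).permMatrix R = σ.permMatrix R ^ s := by
  induction s with
  | zero => simp
  | succ s ih => rw [pow_succ, permMatrix_mul, ih, pow_succ']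

theorem permMatrix_mul_single (σ : Perm ι) (i j : ι) (x : R) :
    σ.permMatrix R * single i j x = single (σ.symm i) j x := by
  rw [PEquiv.toMatrix_toPEquiv_mul]
  exact submatrix_single_equiv σ (Equiv.refl ι) i j x

theorem single_mul_permMatrix (σ : Perm ι) (i j : ι) (x : R) :
    single i j x * σ.permMatrix R = single i (σ j) x := by
  rw [PEquiv.mul_toMatrix_toPEquiv]
  exact submatrix_single_equiv (Equiv.refl ι) σ.symm i j x

theorem permMatrix_mul_vecMulVec_single (σ : Perm ι) (i : ι) (v : ι → R) :
    σ.permMatrix R * vecMulVec (Pi.single i 1) v = vecMulVec (Pi.single (σ.symm i) 1) v := by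
  rw [mul_vecMulVec, PEquiv.toMatrix_toPEquiv_mulVec, Pi.single_comp_equiv]

theorem single_one_mem_of_sameCycle (S : Subalgebra k (Matrix ι ι R)) {σ : Perm ι}
    (hσ : σ.permMatrix R ∈ S) {i₀ : ι} (hcyc : ∀ i, σ.SameCycle i₀ i)
    (h₀ : single i₀ i₀ (1 : R) ∈ S) (i j : ι) : single i j (1 : R) ∈ S := by
  obtain ⟨s, hs⟩ := (hcyc i).symm.exists_nat_pow_eq
  obtain ⟨t, ht⟩ := (hcyc j).exists_nat_pow_eq
  have key : (σ ^ s).permMatrix R * single i₀ i₀ 1 * (σ ^ t).permMatrix R = single i j 1 := by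
    rw [permMatrix_mul_single, single_mul_permMatrix, ht, ← hs]
    simp
  rw [← key, permMatrix_pow, permMatrix_pow]
  exact S.mul_mem (S.mul_mem (S.pow_mem hσ s) h₀) (S.pow_mem hσ t)

theorem sq_vecMulVec_single_add_vecMulVec_single {i j : ι} (hij : i ≠ j) {v : ι → R}
    (hi : v i = 0) (hj : v j = 0) :
    (vecMulVec (Pi.single i 1) (Pi.single i 1) + vecMulVec (Pi.single j 1) v) ^ 2 =
      single i i 1 := by
  simp [sq, add_mul, mul_add, vecMulVec_mul_vecMulVec, hi, hj, hij,
    single_eq_single_vecMulVec_single]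

end Matrix

theorem matrix_algebra_two_generators_general
    (k : Type*) [CommRing k] (R : Type*) [Ring R] [Algebra k R]
    (n : ℕ) (r : Fin n → R)
    (hr : Algebra.adjoin k (Set.range r) = ⊤) :
    ∃ a b : Matrix (Fin (n + 2)) (Fin (n + 2)) R,
      Algebra.adjoin k ({a, b} : Set (Matrix (Fin (n + 2)) (Fin (n + 2)) R)) = ⊤ := by
  set σ := finRotate (n + 2)
  set v : Fin (n + 2) → R := Fin.cons 0 (Fin.snoc r 0)
  set b : Matrix (Fin (n + 2)) (Fin (n + 2)) R :=
    vecMulVec (Pi.single 1 1) (Pi.single 0 1) + vecMulVec (Pi.single 0 1) v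
  refine ⟨σ.permMatrix R, b, ?_⟩
  set S := Algebra.adjoin k {σ.permMatrix R, b}
  have ha : σ.permMatrix R ∈ S := Algebra.subset_adjoin (by simp)
  have hb : b ∈ S := Algebra.subset_adjoin (by simp)
  have hab : σ.permMatrix R * b =
      vecMulVec (Pi.single 0 1) (Pi.single 0 1) + vecMulVec (Pi.single (Fin.last _) 1) v := by
    rw [mul_add, permMatrix_mul_vecMulVec_single, permMatrix_mul_vecMulVec_single,
      σ.symm_apply_eq.2 finRotate_apply_zero.symm,
      σ.symm_apply_eq.2 (finRotate_last (n := n + 1)).symm]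
  have hE : single 0 0 (1 : R) ∈ S := by
    rw [← sq_vecMulVec_single_add_vecMulVec_single Fin.last_pos.ne (v := v) rfl
      (by simp [v, ← Fin.succ_last]), ← hab]
    exact S.pow_mem (S.mul_mem ha hb) 2
  have hcyc : ∀ i, σ.SameCycle 0 i := fun i ↦
    isCycle_finRotate.sameCycle (by simp) (by simp)
  refine subalgebra_eq_top_of_single_one_mem hr S (single_one_mem_of_sameCycle S ha hcyc hE) ?_
  rintro _ ⟨j, rfl⟩
  exact ⟨b, hb, 0, j.castSucc.succ, by simp [b, v, vecMulVec_apply]⟩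

/-- If a `k`-algebra `R` is generated by `n ≥ 1` elements
`r 0, …, r (n-1)`, then the `(n+2) × (n+2)` matrix algebra over `R` is generated
as a `k`-algebra by two elements. -/
theorem matrix_algebra_two_generators
    (k : Type*) [CommRing k] (R : Type*) [Ring R] [Algebra k R]
    (n : ℕ) (hn : 0 < n) (r : Fin n → R)
    (hr : Algebra.adjoin k (Set.range r) = ⊤) :
    ∃ a b : Matrix (Fin (n + 2)) (Fin (n + 2)) R,
      Algebra.adjoin k ({a, b} : Set (Matrix (Fin (n + 2)) (Fin (n + 2)) R)) = ⊤ :=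
  matrix_algebra_two_generators_general k R n r hr
end

section
/- Let k be a field, let R be a finitely generated commutative k-algebra, and let A be a k-subalgebra of R which is a field. Then A is finite-dimensional as a k-vector space. -/
/-- If `k` is a field, `R` a finitely generated commutative
`k`-algebra, and `A` a `k`-subalgebra of `R` which is a field, then `A` is
finite-dimensional over `k`. -/
theorem subfield_of_finitely_generated_is_finite_dimensional
    (k : Type*) [Field k] (R : Type*) [CommRing R] [Algebra k R]
    (hfg : Algebra.FiniteType k R)
    (A : Subalgebra k R) (hA : IsField A) :
    FiniteDimensional k A := by
  let : Field A := hA.toField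
  have : Nontrivial R := Subtype.val_injective.nontrivial (α := A)
  -- Zariski's lemma, applied to a residue field of `R` into which the field `A` embeds.
  exact finite_of_algHom_finiteType_of_isJacobsonRing A.val
end

section
/- Let k be a field and let R be a finitely generated commutative k-algebra. Then the set of idempotent elements of R (elements e with e * e = e) is finite. -/
/-!
Idempotents of a commutative ring correspond to clopen subsets of its prime spectrum. A
finitely generated algebra over a field is Noetherian, so its spectrum is a Noetherian space and
has finitely many irreducible components. Irreducible sets are connected, so a clopen set is the
union of the irreducible components it contains, and is thus determined by a subset of a finite
set.
-/

open TopologicalSpace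

theorem IsClopen.eq_biUnion_irreducibleComponents {X : Type*} [TopologicalSpace X]
    {s : Set X} (hs : IsClopen s) :
    s = ⋃ Z ∈ {Z : irreducibleComponents X | (Z : Set X) ⊆ s}, (Z : Set X) := by
  refine subset_antisymm (fun x hx => ?_) (Set.iUnion₂_subset fun Z hZ => hZ)
  have hxs : irreducibleComponent x ⊆ s :=
    isIrreducible_irreducibleComponent.isPreirreducible.isPreconnected.subset_isClopen hs
      ⟨x, mem_irreducibleComponent, hx⟩
  exact Set.mem_biUnion (x := ⟨_, irreducibleComponent_mem_irreducibleComponents x⟩) hxs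
    mem_irreducibleComponent

theorem NoetherianSpace.finite_clopens (X : Type*) [TopologicalSpace X] [NoetherianSpace X] :
    Finite (Clopens X) := by
  have := NoetherianSpace.finite_irreducibleComponents (α := X) |>.to_subtype
  refine Finite.of_injective
    (fun s : Clopens X => {Z : irreducibleComponents X | (Z : Set X) ⊆ s}) fun s t h => ?_
  ext1
  rw [s.isClopen.eq_biUnion_irreducibleComponents, t.isClopen.eq_biUnion_irreducibleComponents]
  exact congrArg (fun S : Set (irreducibleComponents X) => ⋃ Z ∈ S, (Z : Set X)) h

theorem IsNoetherianRing.finite_setOf_isIdempotentElem (R : Type*) [CommRing R]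
    [IsNoetherianRing R] : {e : R | IsIdempotentElem e}.Finite :=
  have := NoetherianSpace.finite_clopens (PrimeSpectrum R)
  have : Finite {e : R | IsIdempotentElem e} :=
    .of_equiv _ PrimeSpectrum.isIdempotentElemEquivClopens.symm.toEquiv
  Set.toFinite _

/-- If `k` is a field and `R` a finitely generated commutative
`k`-algebra, then the set of idempotent elements of `R` is finite. -/
theorem idempotents_finite_of_finitely_generated
    (k : Type*) [Field k] (R : Type*) [CommRing R] [Algebra k R]
    (hfg : Algebra.FiniteType k R) :
    {e : R | e * e = e}.Finite :=
  have := Algebra.FiniteType.isNoetherianRing k R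
  IsNoetherianRing.finite_setOf_isIdempotentElem R
end

section
/- Let k be a commutative ring, X a set, and W a set of nonidentity elements of the free monoid on X such that: (a) for distinct w, w' in W there are no words u, u' with w' = u * w * u' (no member of W is a subword of another), and (b) for all w, w' in W and every factorization w = a * b with a and b both nonidentity, there is no word c with w' = b * c (no nonempty proper final subword of a member of W is an initial subword of a member of W). Then the k-subalgebra of the free associative k-algebra k⟨X⟩ generated by (the monomials corresponding to) W is free on W; that is, the k-algebra homomorphism from the free associative k-algebra on the set W to k⟨X⟩ sending each element of W to the corresponding monomial of k⟨X⟩ is injective, and its image is the k-subalgebra generated by W. -/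
open FreeMonoid in
/-- If one member of `W` is a prefix of another (as lists), they are equal,
given that no member of `W` is a subword of another. -/
private lemma FreeSub.prefix_eq {X : Type*} {W : Set (FreeMonoid X)}
    (ha : ∀ w ∈ W, ∀ w' ∈ W, w ≠ w' → ¬ ∃ u u' : FreeMonoid X, w' = u * w * u')
    {w w' : FreeMonoid X} (hw : w ∈ W) (hw' : w' ∈ W)
    {t : List X} (ht : toList w' = toList w ++ t) : w = w' := by
  rcases eq_or_ne w w' with h | h
  · exact h
  · exact absurd ⟨1, FreeMonoid.ofList t, toList.injective (by
      simp [ht, FreeMonoid.toList_mul])⟩ (ha w hw w' hw' h)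

open FreeMonoid in
private lemma FreeSub.head_eq {X : Type*} {W : Set (FreeMonoid X)}
    (ha : ∀ w ∈ W, ∀ w' ∈ W, w ≠ w' → ¬ ∃ u u' : FreeMonoid X, w' = u * w * u')
    {w w' : FreeMonoid X} (hw : w ∈ W) (hw' : w' ∈ W)
    {a b : List X} (h : toList w ++ a = toList w' ++ b) : w = w' := by
  rcases List.append_eq_append_iff.1 h with ⟨t, ht, _⟩ | ⟨t, ht, _⟩
  · exact FreeSub.prefix_eq ha hw hw' ht
  · exact (FreeSub.prefix_eq ha hw' hw ht).symm

open FreeMonoid in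
private lemma FreeSub.join_inj {X : Type*} {W : Set (FreeMonoid X)}
    (hW1 : ∀ w ∈ W, w ≠ 1)
    (ha : ∀ w ∈ W, ∀ w' ∈ W, w ≠ w' → ¬ ∃ u u' : FreeMonoid X, w' = u * w * u') :
    ∀ (l l' : List W),
      (l.map fun w => toList w.1).flatten = (l'.map fun w => toList w.1).flatten →
      l = l' := by
  intro l
  induction l with
  | nil =>
    intro l' h
    cases l' with
    | nil => rfl
    | cons w l' =>
      exfalso
      simp only [List.map_nil, List.flatten_nil, List.map_cons, List.flatten_cons] at h
      rcases List.append_eq_nil_iff.1 h.symm with ⟨h1, _⟩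
      exact hW1 w.1 w.2 (toList.injective h1)
  | cons w l ih =>
    intro l' h
    cases l' with
    | nil =>
      exfalso
      simp only [List.map_nil, List.flatten_nil, List.map_cons, List.flatten_cons] at h
      rcases List.append_eq_nil_iff.1 h with ⟨h1, _⟩
      exact hW1 w.1 w.2 (toList.injective h1)
    | cons w' l' =>
      simp only [List.map_cons, List.flatten_cons] at h
      have hww' : w.1 = w'.1 := FreeSub.head_eq ha w.2 w'.2 h
      have hwe : w = w' := Subtype.ext hww'
      subst hwe
      have := List.append_cancel_left h
      rw [ih l' this]

open FreeMonoid in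
private lemma FreeSub.lift_inj {X : Type*} {W : Set (FreeMonoid X)}
    (hW1 : ∀ w ∈ W, w ≠ 1)
    (ha : ∀ w ∈ W, ∀ w' ∈ W, w ≠ w' → ¬ ∃ u u' : FreeMonoid X, w' = u * w * u') :
    Function.Injective (FreeMonoid.lift (fun w : W => w.1)) := by
  intro m m' h
  have hm : ∀ m : FreeMonoid W, toList (FreeMonoid.lift (fun w : W => w.1) m)
      = ((toList m).map fun w => toList w.1).flatten := by
    intro m
    rw [FreeMonoid.lift_apply, FreeMonoid.toList_prod, List.map_map]
    rfl
  have h2 : ((toList m).map fun w => toList w.1).flatten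
      = ((toList m').map fun w => toList w.1).flatten := by
    rw [← hm, ← hm, h]
  exact toList.injective (FreeSub.join_inj hW1 ha _ _ h2)

/-- Let `W` be a set of nonidentity words in the free monoid on `X`
such that no member of `W` is a subword of another and no nonempty proper final
subword of a member of `W` is an initial subword of a member of `W`.  Then the
`k`-subalgebra of `k⟨X⟩` generated by (the monomials corresponding to) `W` is free
on `W`: the `k`-algebra homomorphism from the free associative `k`-algebra on `W`
sending each element of `W` to the corresponding monomial is injective, with image
the subalgebra generated by `W`. -/
theorem free_subalgebra_on_words
    (k : Type*) [CommRing k] (X : Type*) (W : Set (FreeMonoid X))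
    (hW1 : ∀ w ∈ W, w ≠ 1)
    (ha : ∀ w ∈ W, ∀ w' ∈ W, w ≠ w' → ¬ ∃ u u' : FreeMonoid X, w' = u * w * u')
    (hb : ∀ w ∈ W, ∀ w' ∈ W, ∀ a b : FreeMonoid X, w = a * b → a ≠ 1 → b ≠ 1 →
      ¬ ∃ c : FreeMonoid X, w' = b * c) :
    Function.Injective
      (FreeAlgebra.lift k (fun w : W => MonoidAlgebra.of k (FreeMonoid X) w.1)) ∧
    (FreeAlgebra.lift k (fun w : W => MonoidAlgebra.of k (FreeMonoid X) w.1)).range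
      = Algebra.adjoin k (MonoidAlgebra.of k (FreeMonoid X) '' W) := by
  set φ : FreeMonoid W →* FreeMonoid X := FreeMonoid.lift (fun w : W => w.1) with hφdef
  have hφ : Function.Injective φ := FreeSub.lift_inj hW1 ha
  have hcomp : (FreeAlgebra.lift k (fun w : W => MonoidAlgebra.of k (FreeMonoid X) w.1))
      = (MonoidAlgebra.mapDomainAlgHom k k φ).comp
        (FreeAlgebra.equivMonoidAlgebraFreeMonoid (R := k) (X := W)).toAlgHom := by
    apply FreeAlgebra.hom_ext
    funext w
    simp only [Function.comp_apply, FreeAlgebra.lift_ι_apply, AlgHom.coe_comp,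
      AlgEquiv.toAlgHom_eq_coe, AlgHom.coe_coe]
    erw [show (FreeAlgebra.equivMonoidAlgebraFreeMonoid (R := k) (X := W))
        (FreeAlgebra.ι k w)
        = MonoidAlgebra.of k (FreeMonoid W) (FreeMonoid.of w) from
      FreeAlgebra.lift_ι_apply _ _]
    simp only [MonoidAlgebra.of_apply, MonoidAlgebra.mapDomainAlgHom_apply,
      MonoidAlgebra.mapDomain_single]
    simp [hφdef]
  constructor
  · rw [hcomp]
    rw [AlgHom.coe_comp]
    exact (MonoidAlgebra.mapDomain_injective hφ).comp
      (FreeAlgebra.equivMonoidAlgebraFreeMonoid (R := k) (X := W)).injective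
  · rw [Set.image_eq_range]
    exact (Algebra.adjoin_range_eq_range_freeAlgebra_lift (R := k) W
      (fun w : W => MonoidAlgebra.of k (FreeMonoid X) w.1)).symm
end

section
/- Let k be a commutative ring, X a set, and W a set of nonidentity elements of the free monoid on X such that: (a) for distinct w, w' in W there are no words u, u' with w' = u * w * u' (no member of W is a subword of another), and (b) for all w, w' in W and every factorization w = a * b with a and b both nonidentity, there is no word c with w' = b * c (no nonempty proper final subword of a member of W is an initial subword of a member of W). Let A be the k-subalgebra of the free associative k-algebra k⟨X⟩ generated by (the monomials corresponding to) W. Then A has the ideal extension property in k⟨X⟩: every two-sided ideal I of A equals the intersection of A with the two-sided ideal of k⟨X⟩ generated by I. -/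
/-!
Call a word reduced if it has no nonempty prefix in the submonoid `M` generated by `W`; every
word splits as `p t` with `p ∈ M` and `t` reduced. Given an algebra map `f : A → Q`, let `k⟨X⟩`
act on the free `Q`-module on reduced words: a letter `x` sends `t ↦ r` to `t' ↦ f(p) r`, where
`x t = p t'` is such a splitting. Condition (a) makes `M` right unitary, so the splitting is
unique; together with (b) it ensures that while the letters of `w ∈ W` are prepended one by one
to a reduced word `t`, nothing is split off until `w` is complete, and then exactly `w` is. Hence
every `a ∈ A` acts as multiplication by `f a`. For `f : A → A ⧸ I`, the kernel of the action is a
two-sided ideal of `k⟨X⟩` containing `I`, and `a ∈ A` lying in it satisfies `f a = 0`.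
-/

/-- The two-sided ideal of a (possibly noncommutative, possibly nonunital) ring
generated by a set: the smallest two-sided ideal containing the set. -/
def TwoSidedIdeal.span' {R : Type*} [NonUnitalNonAssocRing R] (s : Set R) :
    TwoSidedIdeal R :=
  sInf {I : TwoSidedIdeal R | s ⊆ I}

namespace FreeMonoid

variable {α : Type*}

theorem mul_eq_mul_iff {a b c d : FreeMonoid α} :
    a * b = c * d ↔ (∃ e, c = a * e ∧ b = e * d) ∨ ∃ e, a = c * e ∧ d = e * b := by
  simp only [← toList.injective.eq_iff, toList_mul, List.append_eq_append_iff]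
  constructor
  · rintro (⟨e, h₁, h₂⟩ | ⟨e, h₁, h₂⟩)
    · exact .inl ⟨ofList e, h₁, h₂⟩
    · exact .inr ⟨ofList e, h₁, h₂⟩
  · rintro (⟨e, h₁, h₂⟩ | ⟨e, h₁, h₂⟩)
    · exact .inl ⟨toList e, h₁, h₂⟩
    · exact .inr ⟨toList e, h₁, h₂⟩

end FreeMonoid

namespace TwoSidedIdeal

variable {R : Type*} [NonUnitalNonAssocRing R]

theorem span'_le {s : Set R} {J : TwoSidedIdeal R} (h : s ⊆ J) : span' s ≤ J :=
  sInf_le h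

theorem subset_span' (s : Set R) : s ⊆ span' s :=
  fun _ hx => (mem_sInf R).2 fun _ hJ => hJ hx

end TwoSidedIdeal

namespace IdealExtension

open FreeMonoid

variable {X : Type*}

section Reduced

variable (M : Submonoid (FreeMonoid X))

def IsReduced (t : FreeMonoid X) : Prop :=
  ∀ p s, t = p * s → p ∈ M → p = 1

abbrev Reduced : Type _ := {t : FreeMonoid X // IsReduced M t}

theorem isReduced_one : IsReduced M 1 :=
  fun _ _ h _ => eq_one_of_mul_right' h.symm

theorem exists_mul_isReduced (t : FreeMonoid X) :
    ∃ p ∈ M, ∃ s, t = p * s ∧ IsReduced M s := by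
  induction h : t.length using Nat.strong_induction_on generalizing t with
  | _ n ih =>
    by_cases ht : IsReduced M t
    · exact ⟨1, M.one_mem, t, (one_mul t).symm, ht⟩
    simp only [IsReduced, not_forall] at ht
    obtain ⟨p, s, rfl, hp, hp1⟩ := ht
    have hlt : s.length < n := by
      rw [← h, length_mul, add_comm]
      exact Nat.lt_add_of_pos_right (Nat.pos_of_ne_zero (mt length_eq_zero.1 hp1))
    obtain ⟨p', hp', s', rfl, hs'⟩ := ih _ hlt s rfl
    exact ⟨p * p', M.mul_mem hp hp', s', (mul_assoc _ _ _).symm, hs'⟩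

noncomputable def prefixPart (t : FreeMonoid X) : FreeMonoid X :=
  (exists_mul_isReduced M t).choose

theorem prefixPart_mem (t : FreeMonoid X) : prefixPart M t ∈ M :=
  (exists_mul_isReduced M t).choose_spec.1

noncomputable def reducedPart (t : FreeMonoid X) : Reduced M :=
  ⟨_, (exists_mul_isReduced M t).choose_spec.2.choose_spec.2⟩

theorem prefixPart_mul_reducedPart (t : FreeMonoid X) :
    prefixPart M t * reducedPart M t = t :=
  (exists_mul_isReduced M t).choose_spec.2.choose_spec.1.symm

variable {M}

theorem prefixPart_of_isReduced (s : Reduced M) :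
    prefixPart M s = 1 ∧ reducedPart M s = s := by
  have hsplit := prefixPart_mul_reducedPart M s
  have hp := s.2 _ _ hsplit.symm (prefixPart_mem M s)
  rw [hp, one_mul] at hsplit
  exact ⟨hp, Subtype.ext hsplit⟩

theorem prefixPart_mul (hM : ∀ p d, p ∈ M → p * d ∈ M → d ∈ M) {p : FreeMonoid X} (hp : p ∈ M)
    (s : Reduced M) : prefixPart M (p * s) = p ∧ reducedPart M (p * s) = s := by
  have hsplit := prefixPart_mul_reducedPart M (p * s)
  have hp' := prefixPart_mem M (p * s)
  generalize prefixPart M (p * s) = p', reducedPart M (p * s) = s' at hsplit hp' ⊢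
  suffices p' = p by
    subst this
    exact ⟨rfl, Subtype.ext (mul_left_cancel hsplit)⟩
  rcases FreeMonoid.mul_eq_mul_iff.1 hsplit with ⟨e, rfl, he⟩ | ⟨e, rfl, he⟩
  · rw [s'.2 e s he (hM _ _ hp' hp), mul_one]
  · rw [s.2 e s' he (hM _ _ hp hp'), mul_one]

end Reduced

section Words

def IsInfixFree (W : Set (FreeMonoid X)) : Prop :=
  ∀ w ∈ W, ∀ w' ∈ W, w ≠ w' → ¬ ∃ u u' : FreeMonoid X, w' = u * w * u'

def IsCrossBifixFree (W : Set (FreeMonoid X)) : Prop :=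
  ∀ w ∈ W, ∀ w' ∈ W, ∀ a b : FreeMonoid X, w = a * b → a ≠ 1 → b ≠ 1 →
    ¬ ∃ c : FreeMonoid X, w' = b * c

variable {W : Set (FreeMonoid X)}

theorem IsInfixFree.eq (hW : IsInfixFree W) {w w' : FreeMonoid X} (hw : w ∈ W) (hw' : w' ∈ W)
    {u u' : FreeMonoid X} (h : w' = u * w * u') : w = w' :=
  by_contra fun hne => hW w hw w' hw' hne ⟨u, u', h⟩

theorem IsInfixFree.mem_closure_of_word_mul_mem (hW : IsInfixFree W) {w d : FreeMonoid X}
    (hw : w ∈ W) (hwd : w * d ∈ Submonoid.closure W) : d ∈ Submonoid.closure W := by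
  obtain ⟨L, hL, hLw⟩ := Submonoid.exists_list_of_mem_closure hwd
  cases L with
  | nil => rw [eq_one_of_mul_left' hLw.symm]; exact one_mem _
  | cons w₁ L =>
    have hw₁ : w₁ ∈ W := hL w₁ List.mem_cons_self
    have hL' : L.prod ∈ Submonoid.closure W := Submonoid.list_prod_mem _ fun x hx =>
      Submonoid.subset_closure (hL x (List.mem_cons_of_mem _ hx))
    rw [List.prod_cons] at hLw
    obtain rfl : w₁ = w := by
      rcases FreeMonoid.mul_eq_mul_iff.1 hLw with ⟨e, he, -⟩ | ⟨e, he, -⟩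
      · exact hW.eq hw₁ hw (u := 1) (by rw [one_mul, he])
      · exact (hW.eq hw hw₁ (u := 1) (by rw [one_mul, he])).symm
    rwa [← mul_left_cancel hLw]

theorem IsInfixFree.mem_closure_of_mul_mem (hW : IsInfixFree W) {p d : FreeMonoid X}
    (hp : p ∈ Submonoid.closure W) (hpd : p * d ∈ Submonoid.closure W) :
    d ∈ Submonoid.closure W := by
  induction hp using Submonoid.closure_induction generalizing d with
  | mem w hw => exact hW.mem_closure_of_word_mul_mem hw hpd
  | one => rwa [one_mul] at hpd
  | mul x y _ _ ihx ihy => exact ihy (ihx (by rwa [mul_assoc] at hpd))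

theorem exists_mul_of_mem_closure {p : FreeMonoid X} (hp : p ∈ Submonoid.closure W)
    (hp1 : p ≠ 1) : ∃ w ∈ W, ∃ q, p = w * q := by
  obtain ⟨L, hL, rfl⟩ := Submonoid.exists_list_of_mem_closure hp
  cases L with
  | nil => exact absurd List.prod_nil hp1
  | cons w L => exact ⟨w, hL w List.mem_cons_self, L.prod, List.prod_cons⟩

theorem isReduced_mul (hW : IsInfixFree W) (hW' : IsCrossBifixFree W) {w a c t : FreeMonoid X}
    (hw : w ∈ W) (hwac : w = a * c) (ha : a ≠ 1) (ht : IsReduced (Submonoid.closure W) t) :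
    IsReduced (Submonoid.closure W) (c * t) := by
  rcases eq_or_ne c 1 with rfl | hc
  · rwa [one_mul]
  intro p s hcts hp
  by_contra hp1
  obtain ⟨w', hw', q, rfl⟩ := exists_mul_of_mem_closure hp hp1
  rw [mul_assoc] at hcts
  rcases FreeMonoid.mul_eq_mul_iff.1 hcts with ⟨e, he, -⟩ | ⟨e, he, -⟩
  · exact hW' w hw w' hw' a c hwac ha hc ⟨e, he⟩
  · obtain rfl := hW.eq hw' hw (by rw [hwac, he, mul_assoc])
    have := congrArg length hwac
    simp only [length_mul, he] at this
    exact ha (length_eq_zero.1 (by omega))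

end Words

section Representation

variable {k : Type*} [CommRing k] {W : Set (FreeMonoid X)} {Q : Type*} [Semiring Q] [Algebra k Q]

variable (k W) in
noncomputable abbrev adjoinWords : Subalgebra k (MonoidAlgebra k (FreeMonoid X)) :=
  Algebra.adjoin k (MonoidAlgebra.of k (FreeMonoid X) '' W)

theorem of_mem_adjoinWords {m : FreeMonoid X} (hm : m ∈ Submonoid.closure W) :
    MonoidAlgebra.of k (FreeMonoid X) m ∈ adjoinWords k W :=
  Submonoid.closure_le (S := (adjoinWords k W).toSubmonoid.comap (MonoidAlgebra.of k _)).2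
    (fun w hw => Algebra.subset_adjoin ⟨w, hw, rfl⟩) hm

variable (f : adjoinWords k W →ₐ[k] Q)

noncomputable def prefixCoeff (t : FreeMonoid X) : Q :=
  f ⟨_, of_mem_adjoinWords (prefixPart_mem (Submonoid.closure W) t)⟩

theorem prefixCoeff_eq {t p : FreeMonoid X} (h : prefixPart (Submonoid.closure W) t = p)
    (hp : p ∈ Submonoid.closure W) : prefixCoeff f t = f ⟨_, of_mem_adjoinWords (k := k) hp⟩ := by
  subst h; rfl

theorem apply_mk_of_one (h : MonoidAlgebra.of k (FreeMonoid X) 1 ∈ adjoinWords k W) :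
    f ⟨_, h⟩ = 1 :=
  (congrArg f (Subtype.ext (map_one _))).trans (map_one f)

noncomputable def letterAction (x : X) : Module.End k (Reduced (Submonoid.closure W) →₀ Q) :=
  Finsupp.lsum k fun t => Finsupp.lsingle (reducedPart _ (of x * t)) ∘ₗ
    LinearMap.mulLeft k (prefixCoeff f (of x * t))

noncomputable def wordRep :
    MonoidAlgebra k (FreeMonoid X) →ₐ[k] Module.End k (Reduced (Submonoid.closure W) →₀ Q) :=
  MonoidAlgebra.lift k _ (FreeMonoid X) (FreeMonoid.lift (letterAction f))

theorem letterAction_single (x : X) (t : Reduced (Submonoid.closure W)) (r : Q) :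
    letterAction f x (Finsupp.single t r) =
      Finsupp.single (reducedPart _ (of x * t.1)) (prefixCoeff f (of x * t.1) * r) := by
  simp [letterAction]

theorem wordRep_of_mul (x : X) (g : FreeMonoid X) (v : Reduced (Submonoid.closure W) →₀ Q) :
    wordRep f (MonoidAlgebra.of k _ (of x * g)) v =
      letterAction f x (wordRep f (MonoidAlgebra.of k _ g) v) := by
  simp [wordRep]

variable (hW : IsInfixFree W) (hW' : IsCrossBifixFree W)
include hW hW'

theorem wordRep_of_suffix {w : FreeMonoid X} (hw : w ∈ W) (c : FreeMonoid X) {a : FreeMonoid X}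
    (hwac : w = a * c) (ha : a ≠ 1) (t : Reduced (Submonoid.closure W)) (r : Q) :
    wordRep f (MonoidAlgebra.of k _ c) (Finsupp.single t r) =
      Finsupp.single ⟨c * t, isReduced_mul hW hW' hw hwac ha t.2⟩ r := by
  induction c using FreeMonoid.inductionOn' generalizing a with
  | one =>
    rw [map_one, map_one, Module.End.one_apply]
    congr 1
  | of_mul y c ih =>
    have hwc : w = a * of y * c := by rw [hwac, mul_assoc]
    obtain ⟨hp, hs⟩ := prefixPart_of_isReduced ⟨_, isReduced_mul hW hW' hw hwac ha t.2⟩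
    rw [wordRep_of_mul, ih hwc (mul_ne_one'.2 (.inl ha)), letterAction_single]
    simp only [← mul_assoc] at hs ⊢
    rw [hs, prefixCoeff_eq f hp (one_mem _), apply_mk_of_one, one_mul]

theorem wordRep_of_mem {w : FreeMonoid X} (hw : w ∈ W) (t : Reduced (Submonoid.closure W))
    (r : Q) : wordRep f (MonoidAlgebra.of k _ w) (Finsupp.single t r) =
      Finsupp.single t (f ⟨_, Algebra.subset_adjoin (Set.mem_image_of_mem _ hw)⟩ * r) := by
  cases w with
  | one => rw [apply_mk_of_one, one_mul, map_one, map_one, Module.End.one_apply]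
  | of_mul y c =>
    rw [wordRep_of_mul, wordRep_of_suffix f hW hW' hw c rfl (of_ne_one y), letterAction_single]
    obtain ⟨hp, hs⟩ := prefixPart_mul (fun _ _ => hW.mem_closure_of_mul_mem)
      (Submonoid.subset_closure hw) t
    simp only [← mul_assoc] at hs ⊢
    rw [hs, prefixCoeff_eq f hp (Submonoid.subset_closure hw)]

theorem wordRep_coe (a : adjoinWords k W) (v : Reduced (Submonoid.closure W) →₀ Q) :
    wordRep f a v = f a • v := by
  obtain ⟨b, hb⟩ := a
  induction hb using Algebra.adjoin_induction generalizing v with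
  | mem b hb =>
    obtain ⟨w, hw, rfl⟩ := hb
    induction v using Finsupp.induction_linear with
    | zero => rw [map_zero, smul_zero]
    | add v v' hv hv' => rw [map_add, hv, hv', smul_add]
    | single t r => rw [wordRep_of_mem f hW hW' hw, Finsupp.smul_single, smul_eq_mul]
  | algebraMap c =>
    rw [AlgHom.commutes, Module.algebraMap_end_apply]
    exact ((congrArg (· • v) (f.commutes c)).trans (algebraMap_smul Q c v)).symm
  | add x y hx hy ihx ihy =>
    rw [map_add, LinearMap.add_apply, ihx, ihy, ← add_smul, ← map_add]
    rfl
  | mul x y hx hy ihx ihy =>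
    rw [map_mul, Module.End.mul_apply, ihy, ihx, ← mul_smul, ← map_mul]
    rfl

theorem apply_eq_zero_of_mem_span' {S : Set (adjoinWords k W)} (hS : ∀ s ∈ S, f s = 0)
    {a : adjoinWords k W} (ha : (a : MonoidAlgebra k (FreeMonoid X)) ∈
      TwoSidedIdeal.span' (Subtype.val '' S)) : f a = 0 := by
  have hle : TwoSidedIdeal.span' (Subtype.val '' S) ≤ TwoSidedIdeal.ker (wordRep f) := by
    refine TwoSidedIdeal.span'_le ?_
    rintro _ ⟨s, hs, rfl⟩
    rw [SetLike.mem_coe, TwoSidedIdeal.mem_ker]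
    refine LinearMap.ext fun v => ?_
    rw [wordRep_coe f hW hW', hS s hs, zero_smul, LinearMap.zero_apply]
  have h0 := LinearMap.congr_fun ((TwoSidedIdeal.mem_ker _).1 (hle ha))
    (Finsupp.single ⟨1, isReduced_one _⟩ 1)
  rwa [wordRep_coe f hW hW', Finsupp.smul_single, smul_eq_mul, mul_one, LinearMap.zero_apply,
    Finsupp.single_eq_zero] at h0

end Representation

end IdealExtension

theorem ideal_extension_property_of_words_general
    (k : Type*) [CommRing k] (X : Type*) (W : Set (FreeMonoid X))
    (ha : ∀ w ∈ W, ∀ w' ∈ W, w ≠ w' → ¬ ∃ u u' : FreeMonoid X, w' = u * w * u')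
    (hb : ∀ w ∈ W, ∀ w' ∈ W, ∀ a b : FreeMonoid X, w = a * b → a ≠ 1 → b ≠ 1 →
      ¬ ∃ c : FreeMonoid X, w' = b * c) :
    ∀ I : TwoSidedIdeal (Algebra.adjoin k (MonoidAlgebra.of k (FreeMonoid X) '' W)),
      ∀ a : Algebra.adjoin k (MonoidAlgebra.of k (FreeMonoid X) '' W),
        a ∈ I ↔ (a : MonoidAlgebra k (FreeMonoid X)) ∈
          TwoSidedIdeal.span' (Subtype.val '' (I : Set (Algebra.adjoin k
            (MonoidAlgebra.of k (FreeMonoid X) '' W)))) := by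
  intro I a
  have hI : ∀ x, RingCon.mkₐ k I.ringCon x = 0 ↔ x ∈ I := fun x => by
    show I.ringCon.mk' x = 0 ↔ x ∈ I
    rw [← TwoSidedIdeal.mem_ker, TwoSidedIdeal.ker_ringCon_mk']
  refine ⟨fun h => TwoSidedIdeal.subset_span' _ ⟨a, h, rfl⟩, fun h => (hI a).1 ?_⟩
  exact IdealExtension.apply_eq_zero_of_mem_span' _ ha hb (fun s hs => (hI s).2 hs) h

/-- Let `W` be a set of nonidentity words in the free monoid on `X`
such that no member of `W` is a subword of another and no nonempty proper final
subword of a member of `W` is an initial subword of a member of `W`.  Then the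
`k`-subalgebra `A` of `k⟨X⟩` generated by the monomials corresponding to `W` has the
ideal extension property in `k⟨X⟩`: every two-sided ideal `I` of `A` is the
intersection of `A` with the two-sided ideal of `k⟨X⟩` generated by `I`. -/
theorem ideal_extension_property_of_words
    (k : Type*) [CommRing k] (X : Type*) (W : Set (FreeMonoid X))
    (hW1 : ∀ w ∈ W, w ≠ 1)
    (ha : ∀ w ∈ W, ∀ w' ∈ W, w ≠ w' → ¬ ∃ u u' : FreeMonoid X, w' = u * w * u')
    (hb : ∀ w ∈ W, ∀ w' ∈ W, ∀ a b : FreeMonoid X, w = a * b → a ≠ 1 → b ≠ 1 →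
      ¬ ∃ c : FreeMonoid X, w' = b * c) :
    ∀ I : TwoSidedIdeal (Algebra.adjoin k (MonoidAlgebra.of k (FreeMonoid X) '' W)),
      ∀ a : Algebra.adjoin k (MonoidAlgebra.of k (FreeMonoid X) '' W),
        a ∈ I ↔ (a : MonoidAlgebra k (FreeMonoid X)) ∈
          TwoSidedIdeal.span' (Subtype.val '' (I : Set (Algebra.adjoin k
            (MonoidAlgebra.of k (FreeMonoid X) '' W)))) :=
  ideal_extension_property_of_words_general k X W ha hb
end

section
/- Let f be a function from the positive integers to the positive integers, and let T be the free semigroup on two generators x and y. Then the subsemigroup S of T generated by the elements x * y^n * x^{f(n)} for n ≥ 1 is an isolated subsemigroup of T; moreover, S is free as a semigroup on the set of these elements (every element of S factors uniquely as a product of elements of the form x * y^n * x^{f(n)}). -/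
/-- A subsemigroup `S` of a semigroup `T` is *isolated* if whenever
`t * s * t' ∈ S` with `s ∈ S` and `t, t'` ranging over `T` with an identity
adjoined, each of `t, t'` lies in `S` or is the adjoined identity. -/
def Subsemigroup.IsIsolated {T : Type*} [Semigroup T] (S : Subsemigroup T) : Prop :=
  (∀ t t' s : T, s ∈ S → t * s * t' ∈ S → t ∈ S ∧ t' ∈ S) ∧
  (∀ t s : T, s ∈ S → t * s ∈ S → t ∈ S) ∧
  (∀ t' s : T, s ∈ S → s * t' ∈ S → t' ∈ S)

/-- `spow a n` is the `n`-th power `aⁿ` of an element of a semigroup, for `n ≥ 1`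
(with the junk value `a` at `n = 0`). -/
def spow {M : Type*} [Semigroup M] (a : M) : ℕ → M
  | 0 => a
  | 1 => a
  | n + 2 => spow a (n + 1) * a

namespace MalcevAux

open List

variable {X : Type*}

def toL (w : FreeSemigroup X) : List X := w.1 :: w.2

lemma toL_mul (a b : FreeSemigroup X) : toL (a * b) = toL a ++ toL b := rfl

lemma toL_of (a : X) : toL (FreeSemigroup.of a) = [a] := rfl

lemma toL_ne_nil (a : FreeSemigroup X) : toL a ≠ [] := by simp [toL]

lemma toL_injective : Function.Injective (toL (X := X)) := by
  rintro ⟨h, t⟩ ⟨h', t'⟩ e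
  simp only [toL, List.cons.injEq] at e
  simp [e.1, e.2]

lemma toL_spow (a : X) : ∀ n, 1 ≤ n →
    toL (spow (FreeSemigroup.of a) n) = List.replicate n a
  | 1, _ => rfl
  | n + 2, _ => by
    rw [show spow (FreeSemigroup.of a) (n + 2)
        = spow (FreeSemigroup.of a) (n + 1) * FreeSemigroup.of a from rfl,
      toL_mul, toL_spow a (n + 1) (by omega), toL_of, ← List.replicate_succ']

def block (f : ℕ → ℕ) (x y : X) (n : ℕ) : List X :=
  x :: (List.replicate n y ++ List.replicate (f n) x)

def blocks (f : ℕ → ℕ) (x y : X) : List ℕ → List X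
  | [] => []
  | n :: L => block f x y n ++ blocks f x y L

lemma blocks_append (f : ℕ → ℕ) (x y : X) (L M : List ℕ) :
    blocks f x y (L ++ M) = blocks f x y L ++ blocks f x y M := by
  induction L with
  | nil => rfl
  | cons n L ih => simp [blocks, ih]

lemma blocks_ne_nil (f : ℕ → ℕ) (x y : X) {L : List ℕ} (hL : L ≠ []) :
    blocks f x y L ≠ [] := by
  cases L with
  | nil => exact absurd rfl hL
  | cons n L => simp [blocks, block]

lemma blocks_nil_or_cons (f : ℕ → ℕ) (x y : X) (L : List ℕ) :
    blocks f x y L = [] ∨ ∃ s', blocks f x y L = x :: s' := by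
  cases L with
  | nil => exact Or.inl rfl
  | cons n L => exact Or.inr ⟨_, rfl⟩

lemma split_word (w : FreeSemigroup X) (a b : List X) (ha : a ≠ []) (hb : b ≠ [])
    (h : toL w = a ++ b) : ∃ u v : FreeSemigroup X, w = u * v ∧ toL u = a ∧ toL v = b := by
  cases a with
  | nil => exact absurd rfl ha
  | cons ah at' =>
    cases b with
    | nil => exact absurd rfl hb
    | cons bh bt =>
      refine ⟨⟨ah, at'⟩, ⟨bh, bt⟩, toL_injective ?_, rfl, rfl⟩
      rw [h, toL_mul]; rfl

lemma yrun {x y : X} (hxy : x ≠ y) : ∀ (n m : ℕ) (r r' : List X),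
    List.replicate n y ++ x :: r = List.replicate m y ++ x :: r' → n = m ∧ r = r' := by
  intro n
  induction n with
  | zero =>
    intro m r r' h
    cases m with
    | zero => simpa using h
    | succ m => simp [List.replicate_succ] at h; exact absurd h.1 hxy
  | succ n ih =>
    intro m r r' h
    cases m with
    | zero => simp [List.replicate_succ] at h; exact absurd h.1.symm hxy
    | succ m =>
      simp only [List.replicate_succ, List.cons_append, List.cons.injEq] at h
      obtain ⟨h1, h2⟩ := ih m r r' h.2
      exact ⟨by omega, h2⟩

lemma runD {x y : X} (hxy : x ≠ y) : ∀ (n k : ℕ) (s t' rest : List X), 1 ≤ k →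
    (s = [] ∨ ∃ s', s = x :: s') →
    List.replicate n y ++ (List.replicate k x ++ s) = t' ++ x :: y :: rest →
    ∃ t'', t' = List.replicate n y ++ List.replicate k x ++ t'' ∧ s = t'' ++ x :: y :: rest := by
  intro n
  induction n with
  | zero =>
    intro k
    induction k with
    | zero => omega
    | succ k ih =>
      intro s t' rest _ hs h
      simp only [List.replicate_succ, List.nil_append, List.cons_append] at h
      cases t' with
      | nil =>
        rw [List.nil_append] at h
        have h2 := (List.cons.inj h).2
        exfalso
        cases k with
        | zero =>
          rw [List.replicate_zero, List.nil_append] at h2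
          rcases hs with rfl | ⟨s', rfl⟩
          · simp at h2
          · exact hxy (List.cons.inj h2).1
        | succ k =>
          rw [List.replicate_succ, List.cons_append] at h2
          exact hxy (List.cons.inj h2).1
      | cons c t'' =>
        rw [List.cons_append] at h
        obtain ⟨hc, h2⟩ := List.cons.inj h
        subst hc
        cases k with
        | zero =>
          rw [List.replicate_zero, List.nil_append] at h2
          exact ⟨t'', by simp [List.replicate_succ], h2⟩
        | succ k =>
          obtain ⟨t₃, ht₃, hs'⟩ := ih s t'' rest (by omega) hs
            (by simpa using h2)
          exact ⟨t₃, by simp only [List.replicate_succ, List.replicate_zero, List.nil_append,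
            List.cons_append] at ht₃ ⊢; simp [ht₃], hs'⟩
  | succ n ih =>
    intro k s t' rest hk hs h
    simp only [List.replicate_succ, List.cons_append] at h
    cases t' with
    | nil =>
      rw [List.nil_append] at h
      exact absurd (List.cons.inj h).1.symm hxy
    | cons c t'' =>
      rw [List.cons_append] at h
      obtain ⟨hc, h2⟩ := List.cons.inj h
      subst hc
      obtain ⟨t₃, ht₃, hs'⟩ := ih k s t'' rest hk hs h2
      exact ⟨t₃, by simp [List.replicate_succ, ht₃], hs'⟩

variable {x y : X} {f : ℕ → ℕ}

lemma boundary (hxy : x ≠ y) (hf : ∀ n, 1 ≤ n → 1 ≤ f n) :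
    ∀ (L : List ℕ) (t rest : List X), (∀ n ∈ L, 1 ≤ n) →
    blocks f x y L = t ++ x :: y :: rest →
    ∃ L₁ L₂, L = L₁ ++ L₂ ∧ t = blocks f x y L₁ ∧ x :: y :: rest = blocks f x y L₂ := by
  intro L
  induction L with
  | nil => intro t rest _ h; simp [blocks] at h
  | cons n L' ih =>
    intro t rest hL h
    cases t with
    | nil => exact ⟨[], n :: L', rfl, rfl, by simpa using h.symm⟩
    | cons c t₀ =>
      rw [blocks, block, List.cons_append, List.cons_append] at h
      obtain ⟨hc, h2⟩ := List.cons.inj h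
      subst hc
      rw [List.append_assoc] at h2
      obtain ⟨t'', ht'', hbl⟩ := runD hxy n (f n) (blocks f x y L') t₀ rest
        (hf n (hL n (List.mem_cons_self))) (blocks_nil_or_cons f x y L') h2
      obtain ⟨L₁, L₂, hLeq, ht₂, heq⟩ := ih t'' rest
        (fun m hm => hL m (List.mem_cons_of_mem _ hm)) hbl
      refine ⟨n :: L₁, L₂, by rw [hLeq]; rfl, ?_, heq⟩
      simp [blocks, block, ht'', ht₂, List.append_assoc]

lemma strip (hxy : x ≠ y) (hf : ∀ n, 1 ≤ n → 1 ≤ f n) :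
    ∀ (M L₂ : List ℕ) (t' : List X), (∀ n ∈ M, 1 ≤ n) → (∀ n ∈ L₂, 1 ≤ n) →
    blocks f x y M ++ t' = blocks f x y L₂ →
    ∃ L₃, L₂ = M ++ L₃ ∧ t' = blocks f x y L₃ := by
  intro M
  induction M with
  | nil => intro L₂ t' _ _ h; exact ⟨L₂, rfl, by simpa [blocks] using h⟩
  | cons m M' ih =>
    intro L₂ t' hM hL₂ h
    cases L₂ with
    | nil => exfalso; simp [blocks, block] at h
    | cons n L₂' =>
      simp only [blocks, block, List.cons_append, List.append_assoc, List.cons.injEq] at h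
      obtain ⟨-, h2⟩ := h
      have hm1 : 1 ≤ m := hM m (List.mem_cons_self)
      have hn1 : 1 ≤ n := hL₂ n (List.mem_cons_self)
      obtain ⟨a, ea⟩ : ∃ a, f m = a + 1 := ⟨f m - 1, by have := hf m hm1; omega⟩
      obtain ⟨b, eb⟩ : ∃ b, f n = b + 1 := ⟨f n - 1, by have := hf n hn1; omega⟩
      rw [ea, eb] at h2
      simp only [List.replicate_succ, List.cons_append] at h2
      obtain ⟨rfl, h3⟩ := yrun hxy m n _ _ h2
      rw [ea] at eb
      obtain rfl : a = b := by omega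
      clear ea eb
      have h4 : blocks f x y M' ++ t' = blocks f x y L₂' := List.append_cancel_left h3
      obtain ⟨L₃, hL₃, ht'⟩ := ih L₂' t' (fun a ha => hM a (List.mem_cons_of_mem _ ha))
        (fun a ha => hL₂ a (List.mem_cons_of_mem _ ha)) h4
      exact ⟨L₃, by rw [hL₃]; rfl, ht'⟩

lemma blocks_inj (hxy : x ≠ y) (hf : ∀ n, 1 ≤ n → 1 ≤ f n)
    {L M : List ℕ} (hL : ∀ n ∈ L, 1 ≤ n) (hM : ∀ n ∈ M, 1 ≤ n)
    (h : blocks f x y L = blocks f x y M) : L = M := by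
  obtain ⟨L₃, hL₃, ht⟩ := strip hxy hf L M [] hL hM (by simpa using h)
  cases L₃ with
  | nil => exact (by simpa using hL₃ : M = L).symm
  | cons a L₃ => exact absurd ht.symm (blocks_ne_nil f x y (by simp))

lemma main_split (hxy : x ≠ y) (hf : ∀ n, 1 ≤ n → 1 ≤ f n)
    (L M : List ℕ) (t t' : List X) (hL : ∀ n ∈ L, 1 ≤ n) (hM : ∀ n ∈ M, 1 ≤ n)
    (hMne : M ≠ []) (h : blocks f x y L = t ++ (blocks f x y M ++ t')) :
    ∃ L₁ L₃, L = L₁ ++ M ++ L₃ ∧ t = blocks f x y L₁ ∧ t' = blocks f x y L₃ := by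
  cases M with
  | nil => exact absurd rfl hMne
  | cons m M₀ =>
    have hm1 : 1 ≤ m := hM m (List.mem_cons_self)
    have em : m = (m - 1) + 1 := by omega
    have hbM : blocks f x y (m :: M₀)
        = x :: y :: (List.replicate (m - 1) y ++ (List.replicate (f m) x ++ blocks f x y M₀)) := by
      have hrep : List.replicate m y = y :: List.replicate (m - 1) y := by
        conv_lhs => rw [em]
        rw [List.replicate_succ]
      rw [blocks, block, hrep]
      simp [List.append_assoc]
    rw [hbM] at h
    have h' : blocks f x y L
        = (t : List X) ++ x :: y ::
          (List.replicate (m - 1) y ++ (List.replicate (f m) x ++ blocks f x y M₀) ++ t') := by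
      rw [h]; simp [List.append_assoc]
    obtain ⟨L₁, L₂, hLeq, ht, heq⟩ := boundary hxy hf L t _ hL h'
    have hL₂ : ∀ n ∈ L₂, 1 ≤ n := fun a ha => hL a (hLeq ▸ List.mem_append_right _ ha)
    have hstrip : blocks f x y (m :: M₀) ++ t' = blocks f x y L₂ := by
      rw [hbM, ← heq]; simp [List.append_assoc]
    obtain ⟨L₃, hL₂eq, ht'⟩ := strip hxy hf (m :: M₀) L₂ t' hM hL₂ hstrip
    exact ⟨L₁, L₃, by rw [hLeq, hL₂eq, List.append_assoc], ht, ht'⟩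

def gen (f : ℕ → ℕ) (x y : X) (n : ℕ) : FreeSemigroup X :=
  FreeSemigroup.of x * spow (FreeSemigroup.of y) n * spow (FreeSemigroup.of x) (f n)

lemma toL_gen (hf : ∀ n, 1 ≤ n → 1 ≤ f n) (n : ℕ) (hn : 1 ≤ n) :
    toL (gen f x y n) = block f x y n := by
  rw [gen, toL_mul, toL_mul, toL_of, toL_spow y n hn, toL_spow x (f n) (hf n hn), block]
  simp

def gens (f : ℕ → ℕ) (x y : X) : Set (FreeSemigroup X) := {w | ∃ n, 1 ≤ n ∧ w = gen f x y n}

lemma mem_of_blocks (hf : ∀ n, 1 ≤ n → 1 ≤ f n) :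
    ∀ (L : List ℕ), L ≠ [] → (∀ n ∈ L, 1 ≤ n) → ∀ w : FreeSemigroup X,
    toL w = blocks f x y L → w ∈ Subsemigroup.closure (gens f x y) := by
  intro L
  induction L with
  | nil => intro h; exact absurd rfl h
  | cons n L' ih =>
    intro _ hL w hw
    have hn : 1 ≤ n := hL n (List.mem_cons_self)
    cases L' with
    | nil =>
      have : toL w = toL (gen f x y n) := by
        rw [toL_gen hf n hn, hw, blocks, blocks, List.append_nil]
      rw [toL_injective this]
      exact Subsemigroup.subset_closure ⟨n, hn, rfl⟩
    | cons a L'' =>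
      rw [blocks] at hw
      obtain ⟨u, v, rfl, hu, hv⟩ := split_word w _ _ (by simp [block])
        (blocks_ne_nil f x y (by simp)) hw
      refine mul_mem (Subsemigroup.subset_closure
        ⟨n, hn, toL_injective (hu.trans (toL_gen hf n hn).symm)⟩) ?_
      exact ih (by simp) (fun m hm => hL m (List.mem_cons_of_mem _ hm)) v hv

lemma mem_closure_iff (hf : ∀ n, 1 ≤ n → 1 ≤ f n) (w : FreeSemigroup X) :
    w ∈ Subsemigroup.closure (gens f x y) ↔
    ∃ L, L ≠ [] ∧ (∀ n ∈ L, 1 ≤ n) ∧ toL w = blocks f x y L := by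
  constructor
  · intro hw
    induction hw using Subsemigroup.closure_induction with
    | mem w hw =>
      obtain ⟨n, hn, rfl⟩ := hw
      exact ⟨[n], by simp, by simpa using hn,
        by rw [toL_gen hf n hn, blocks, blocks, List.append_nil]⟩
    | mul u v hu hv ihu ihv =>
      obtain ⟨La, hane, ha1, ha⟩ := ihu
      obtain ⟨Lb, hbne, hb1, hb⟩ := ihv
      refine ⟨La ++ Lb, by simp [hane], ?_, by rw [toL_mul, ha, hb, blocks_append]⟩
      intro m hm
      rcases List.mem_append.1 hm with h | h
      · exact ha1 m h
      · exact hb1 m h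
  · rintro ⟨L, hne, h1, h⟩
    exact mem_of_blocks hf L hne h1 w h

lemma toL_lift (hf : ∀ n, 1 ≤ n → 1 ≤ f n) (e : FreeSemigroup {n : ℕ // 1 ≤ n}) :
    toL (FreeSemigroup.lift (fun p : {n : ℕ // 1 ≤ n} => gen f x y p.1) e)
      = blocks f x y ((e.1 :: e.2).map Subtype.val) := by
  induction e using FreeSemigroup.recOnMul with
  | ih1 a =>
    rw [FreeSemigroup.lift_of, toL_gen hf a.1 a.2]
    simp [blocks]
  | ih2 a e iha ihe =>
    rw [map_mul, toL_mul, FreeSemigroup.lift_of, toL_gen hf a.1 a.2, ihe]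
    rfl

end MalcevAux

/-- Let `f` be a function from the positive integers to the positive
integers and `T` the free semigroup on two generators `x ≠ y`.  Then the subsemigroup
`S` generated by the elements `x * yⁿ * x^(f n)` for `n ≥ 1` is isolated in `T`, and
`S` is free on these elements: the semigroup homomorphism from the free semigroup on
`{n : ℕ // 1 ≤ n}` sending `n` to `x * yⁿ * x^(f n)` is injective with range `S`. -/
theorem malcev_shirshov_subsemigroup_isolated_and_free
    (X : Type*) (x y : X) (hxy : x ≠ y) (hX : ∀ a : X, a = x ∨ a = y)
    (f : ℕ → ℕ) (hf : ∀ n, 1 ≤ n → 1 ≤ f n) :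
    Subsemigroup.IsIsolated
      (Subsemigroup.closure
        {w : FreeSemigroup X | ∃ n, 1 ≤ n ∧
          w = FreeSemigroup.of x * spow (FreeSemigroup.of y) n
                * spow (FreeSemigroup.of x) (f n)}) ∧
    Function.Injective
      (FreeSemigroup.lift (fun p : {n : ℕ // 1 ≤ n} =>
        FreeSemigroup.of x * spow (FreeSemigroup.of y) p.1
          * spow (FreeSemigroup.of x) (f p.1))) ∧
    Set.range
      (FreeSemigroup.lift (fun p : {n : ℕ // 1 ≤ n} =>
        FreeSemigroup.of x * spow (FreeSemigroup.of y) p.1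
          * spow (FreeSemigroup.of x) (f p.1)))
      = (Subsemigroup.closure
          {w : FreeSemigroup X | ∃ n, 1 ≤ n ∧
            w = FreeSemigroup.of x * spow (FreeSemigroup.of y) n
                  * spow (FreeSemigroup.of x) (f n)} : Set (FreeSemigroup X)) := by
  open MalcevAux in
  show Subsemigroup.IsIsolated (Subsemigroup.closure (gens f x y)) ∧
    Function.Injective (FreeSemigroup.lift (fun p : {n : ℕ // 1 ≤ n} => gen f x y p.1)) ∧
    Set.range (FreeSemigroup.lift (fun p : {n : ℕ // 1 ≤ n} => gen f x y p.1))
      = (Subsemigroup.closure (gens f x y) : Set (FreeSemigroup X))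
  refine ⟨⟨?_, ?_, ?_⟩, ?_, ?_⟩
  · -- two-sided isolation
    intro t t' s hs hts
    obtain ⟨M, hMne, hM1, hM⟩ := (mem_closure_iff hf s).1 hs
    obtain ⟨L, hLne, hL1, hL⟩ := (mem_closure_iff hf _).1 hts
    rw [toL_mul, toL_mul, hM, List.append_assoc] at hL
    obtain ⟨L₁, L₃, hLeq, ht, ht'⟩ := main_split hxy hf L M _ _ hL1 hM1 hMne hL.symm
    have h1 : ∀ m ∈ L₁, 1 ≤ m := fun m hm => hL1 m (by rw [hLeq]; simp [hm])
    have h3 : ∀ m ∈ L₃, 1 ≤ m := fun m hm => hL1 m (by rw [hLeq]; simp [hm])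
    have hL₁ne : L₁ ≠ [] := by
      rintro rfl; exact toL_ne_nil t ht
    have hL₃ne : L₃ ≠ [] := by
      rintro rfl; exact toL_ne_nil t' ht'
    exact ⟨mem_of_blocks hf L₁ hL₁ne h1 t ht, mem_of_blocks hf L₃ hL₃ne h3 t' ht'⟩
  · -- left
    intro t s hs hts
    obtain ⟨M, hMne, hM1, hM⟩ := (mem_closure_iff hf s).1 hs
    obtain ⟨L, hLne, hL1, hL⟩ := (mem_closure_iff hf _).1 hts
    rw [toL_mul, hM] at hL
    have hL' : blocks f x y L = toL t ++ (blocks f x y M ++ []) := by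
      rw [List.append_nil]; exact hL.symm
    obtain ⟨L₁, L₃, hLeq, ht, ht'⟩ := main_split hxy hf L M _ _ hL1 hM1 hMne hL'
    have h1 : ∀ m ∈ L₁, 1 ≤ m := fun m hm => hL1 m (by rw [hLeq]; simp [hm])
    have hL₁ne : L₁ ≠ [] := by rintro rfl; exact toL_ne_nil t ht
    exact mem_of_blocks hf L₁ hL₁ne h1 t ht
  · -- right
    intro t' s hs hts
    obtain ⟨M, hMne, hM1, hM⟩ := (mem_closure_iff hf s).1 hs
    obtain ⟨L, hLne, hL1, hL⟩ := (mem_closure_iff hf _).1 hts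
    rw [toL_mul, hM] at hL
    have hL' : blocks f x y L = [] ++ (blocks f x y M ++ toL t') := by
      rw [List.nil_append]; exact hL.symm
    obtain ⟨L₁, L₃, hLeq, ht, ht'⟩ := main_split hxy hf L M _ _ hL1 hM1 hMne hL'
    have h3 : ∀ m ∈ L₃, 1 ≤ m := fun m hm => hL1 m (by rw [hLeq]; simp [hm])
    have hL₃ne : L₃ ≠ [] := by rintro rfl; exact toL_ne_nil t' ht'
    exact mem_of_blocks hf L₃ hL₃ne h3 t' ht'
  · -- injectivity
    intro e e' h
    have h2 := congrArg toL h
    rw [toL_lift hf, toL_lift hf] at h2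
    have h3 := blocks_inj hxy hf ?_ ?_ h2
    · have h4 : (e.1 :: e.2) = (e'.1 :: e'.2) :=
        List.map_injective_iff.mpr Subtype.val_injective h3
      obtain ⟨h5, h6⟩ := List.cons.inj h4
      exact FreeSemigroup.ext h5 h6
    · rintro n hn
      rw [List.mem_map] at hn
      obtain ⟨p, -, rfl⟩ := hn
      exact p.2
    · rintro n hn
      rw [List.mem_map] at hn
      obtain ⟨p, -, rfl⟩ := hn
      exact p.2
  · -- range = closure
    apply Set.Subset.antisymm
    · rintro _ ⟨e, rfl⟩
      induction e using FreeSemigroup.recOnMul with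
      | ih1 a => exact Subsemigroup.subset_closure ⟨a.1, a.2, by rw [FreeSemigroup.lift_of]⟩
      | ih2 a e iha ihe =>
        rw [map_mul]
        exact mul_mem iha ihe
    · intro w hw
      induction hw using Subsemigroup.closure_induction with
      | mem w hw =>
        obtain ⟨n, hn, rfl⟩ := hw
        exact ⟨FreeSemigroup.of ⟨n, hn⟩, by rw [FreeSemigroup.lift_of]⟩
      | mul u v hu hv ihu ihv =>
        obtain ⟨e, he⟩ := ihu
        obtain ⟨e', he'⟩ := ihv
        exact ⟨e * e', by rw [map_mul, he, he']⟩
end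

section
/- Let k be a commutative ring, let f be a function from the positive integers to the positive integers, let B be the free nonunital associative k-algebra on two generators x and y (the nonunital semigroup algebra over k of the free semigroup on {x, y}), and let A be the nonunital k-subalgebra of B generated by the monomials x * y^n * x^{f(n)} for n ≥ 1. Then A is a free nonunital associative k-algebra on this countably infinite family of monomials (the natural homomorphism from the free nonunital associative k-algebra on countably many generators sending the n-th generator to x * y^n * x^{f(n)} is injective with image A), and A has the ideal extension property in B: every two-sided ideal I of A equals the intersection of A with the two-sided ideal of B generated by I. -/
/-- The word `x * yⁿ * x^(f n)` in the free semigroup on `X`. -/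
def malcevWord {X : Type*} (x y : X) (f : ℕ → ℕ) (n : ℕ) : FreeSemigroup X :=
  FreeSemigroup.of x * spow (FreeSemigroup.of y) n * spow (FreeSemigroup.of x) (f n)

/-- The nonunital subalgebra of the free nonunital associative `k`-algebra on `X`
(realized as the nonunital semigroup algebra of the free semigroup on `X`)
generated by the monomials `x * yⁿ * x^(f n)` for `n ≥ 1`. -/
noncomputable def malcevSubalgebra (k : Type*) [CommRing k] {X : Type*} (x y : X) (f : ℕ → ℕ) :
    NonUnitalSubalgebra k (MonoidAlgebra k (FreeSemigroup X)) :=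
  NonUnitalAlgebra.adjoin k
    {m : MonoidAlgebra k (FreeSemigroup X) | ∃ n, 1 ≤ n ∧
      m = MonoidAlgebra.single (malcevWord x y f n) 1}

/-- The natural homomorphism from the free nonunital associative `k`-algebra on the
countably many generators `{n : ℕ // 1 ≤ n}` to the free nonunital associative
`k`-algebra on `{x, y}`, sending the `n`-th generator to `x * yⁿ * x^(f n)`:
it is induced by `Finsupp.mapDomain` along the corresponding semigroup homomorphism. -/
noncomputable def malcevHom (k : Type*) [CommRing k] {X : Type*} (x y : X)
    (f : ℕ → ℕ) :
    MonoidAlgebra k (FreeSemigroup {n : ℕ // 1 ≤ n}) →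
      MonoidAlgebra k (FreeSemigroup X) :=
  fun a => MonoidAlgebra.ofCoeff (Finsupp.mapDomain
    (FreeSemigroup.lift (fun p : {n : ℕ // 1 ≤ n} => malcevWord x y f p.1)) a.coeff)

theorem TwoSidedIdeal.mem_iff_mem_span'_image_of_retraction {B S : Type*} [NonUnitalRing B]
    [SetLike S B] [NonUnitalSubringClass S B] {A : S} (ρ : B →+ A)
    (hρ : ∀ a : A, ρ a = a) (hl : ∀ b (a : A), ρ (b * a) = ρ b * a)
    (hr : ∀ (a : A) b, ρ (a * b) = a * ρ b)
    (hlr : ∀ b (a : A) b', ρ (b * a * b') = ρ b * a * ρ b')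
    (I : TwoSidedIdeal A) (a : A) :
    a ∈ I ↔ (a : B) ∈ TwoSidedIdeal.span' (Subtype.val '' (I : Set A)) := by
  refine ⟨fun ha => (TwoSidedIdeal.mem_sInf _).2 fun J hJ => hJ ⟨a, ha, rfl⟩, fun ha => ?_⟩
  -- an ideal of `B` containing `I` on which `ρ` takes values in `I`
  let K : TwoSidedIdeal B := .mk'
    {z | ρ z ∈ I ∧ (∀ b, ρ (b * z) ∈ I) ∧ (∀ b, ρ (z * b) ∈ I) ∧ ∀ b b', ρ (b * z * b') ∈ I}
    (by simp [I.zero_mem])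
    (fun ⟨h₁, h₂, h₃, h₄⟩ ⟨h₁', h₂', h₃', h₄'⟩ => ⟨
      by simpa using I.add_mem h₁ h₁',
      fun b => by simpa [mul_add] using I.add_mem (h₂ b) (h₂' b),
      fun b => by simpa [add_mul] using I.add_mem (h₃ b) (h₃' b),
      fun b b' => by simpa [mul_add, add_mul] using I.add_mem (h₄ b b') (h₄' b b')⟩)
    (fun ⟨h₁, h₂, h₃, h₄⟩ => ⟨by simpa using I.neg_mem h₁,
      fun b => by simpa using I.neg_mem (h₂ b), fun b => by simpa using I.neg_mem (h₃ b),
      fun b b' => by simpa using I.neg_mem (h₄ b b')⟩)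
    (fun {c z} ⟨_, h₂, _, h₄⟩ => ⟨h₂ c, fun b => by simpa [mul_assoc] using h₂ (b * c),
      fun b => h₄ c b, fun b b' => by simpa [mul_assoc] using h₄ (b * c) b'⟩)
    (fun {z c} ⟨_, h₂, h₃, h₄⟩ => ⟨h₃ c, fun b => by simpa [mul_assoc] using h₄ b c,
      fun b => by simpa [mul_assoc] using h₃ (c * b),
      fun b b' => by simpa [mul_assoc] using h₄ b (c * b')⟩)
  have hIK : Subtype.val '' (I : Set A) ⊆ K := by
    rintro _ ⟨i, hi, rfl⟩
    refine (TwoSidedIdeal.mem_mk' ..).2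
      ⟨by simpa [hρ] using hi, fun b => ?_, fun b => ?_, fun b b' => ?_⟩
    · rw [hl]; exact I.mul_mem_left _ _ hi
    · rw [hr]; exact I.mul_mem_right _ _ hi
    · rw [hlr]; exact I.mul_mem_right _ _ (I.mul_mem_left _ _ hi)
  have haK : (a : B) ∈ K := sInf_le (α := TwoSidedIdeal B) hIK ha
  simpa [K, hρ] using ((TwoSidedIdeal.mem_mk' ..).1 haK).1

namespace MonoidAlgebra

section Filter

variable {k M : Type*} [Semiring k] {S : Set M} [DecidablePred (· ∈ S)]

variable (S) in
def filterHom : MonoidAlgebra k M →+ MonoidAlgebra k M where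
  toFun z := ofCoeff (z.coeff.filter (· ∈ S))
  map_zero' := by simp [Finsupp.filter_zero]
  map_add' z w := by simp [coeff_add, Finsupp.filter_add, ofCoeff_add]

theorem filterHom_eq_ite {z : MonoidAlgebra k M} (p : Prop) [Decidable p]
    (h : ∀ g ∈ z.coeff.support, g ∈ S ↔ p) : filterHom S z = if p then z else 0 := by
  split_ifs with hp
  · exact coeff_injective <| (Finsupp.filter_eq_self_iff _ _).2 fun g hg =>
      (h g (Finsupp.mem_support_iff.2 hg)).2 hp
  · exact coeff_injective <| (Finsupp.filter_eq_zero_iff _ _).2 fun g hgS => by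
      by_contra hg
      exact hp ((h g (Finsupp.mem_support_iff.2 hg)).1 hgS)

theorem filterHom_single (u : M) (c : k) :
    filterHom S (single u c) = if u ∈ S then single u c else 0 :=
  filterHom_eq_ite _ fun g hg => by rw [Finset.mem_singleton.1 (Finsupp.support_single_subset hg)]

theorem filterHom_of_mem_supported {z : MonoidAlgebra k M} (hz : z ∈ supported k k S) :
    filterHom S z = z := by
  simpa using filterHom_eq_ite True fun g hg => iff_true_intro (hz hg)

theorem filterHom_mem_supported (z : MonoidAlgebra k M) : filterHom S z ∈ supported k k S :=
  fun _ hg => (Finset.mem_filter.1 hg).2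

variable [Semigroup M] {a : MonoidAlgebra k M}

theorem filterHom_mul_of_mem_supported_right (hS : ∀ s ∈ S, ∀ u, u * s ∈ S ↔ u ∈ S)
    (ha : a ∈ supported k k S) (b : MonoidAlgebra k M) :
    filterHom S (b * a) = filterHom S b * a := by
  classical
  induction b using induction_linear with
  | zero => simp
  | add b b' hb hb' => simp [add_mul, hb, hb']
  | single u c =>
    rw [filterHom_single, filterHom_eq_ite (u ∈ S)]
    · split_ifs <;> simp
    intro g hg
    obtain ⟨s, hs, rfl⟩ := Finset.mem_image.1 (support_coeff_single_mul_subset a c u hg)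
    exact hS s (ha hs) u

theorem filterHom_mul_of_mem_supported_left (hS : ∀ s ∈ S, ∀ v, s * v ∈ S ↔ v ∈ S)
    (ha : a ∈ supported k k S) (b : MonoidAlgebra k M) :
    filterHom S (a * b) = a * filterHom S b := by
  classical
  induction b using induction_linear with
  | zero => simp
  | add b b' hb hb' => simp [mul_add, hb, hb']
  | single v c =>
    rw [filterHom_single, filterHom_eq_ite (v ∈ S)]
    · split_ifs <;> simp
    intro g hg
    obtain ⟨s, hs, rfl⟩ := Finset.mem_image.1 (support_coeff_mul_single_subset a c v hg)
    exact hS s (ha hs) v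

theorem filterHom_mul_mul_of_mem_supported
    (hS : ∀ s ∈ S, ∀ u v, u * s * v ∈ S ↔ u ∈ S ∧ v ∈ S)
    (ha : a ∈ supported k k S) (b b' : MonoidAlgebra k M) :
    filterHom S (b * a * b') = filterHom S b * a * filterHom S b' := by
  classical
  induction b using induction_linear with
  | zero => simp
  | add b₁ b₂ hb₁ hb₂ => simp [add_mul, hb₁, hb₂]
  | single u c =>
    induction b' using induction_linear with
    | zero => simp
    | add b₁ b₂ hb₁ hb₂ => simp [mul_add, hb₁, hb₂]
    | single v c' =>
      rw [filterHom_single, filterHom_single, filterHom_eq_ite (u ∈ S ∧ v ∈ S)]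
      · split_ifs <;> simp_all
      intro g hg
      obtain ⟨t, ht, rfl⟩ := Finset.mem_image.1 (support_coeff_mul_single_subset _ c' v hg)
      obtain ⟨s, hs, rfl⟩ := Finset.mem_image.1 (support_coeff_single_mul_subset a c u ht)
      exact hS s (ha hs) u v

end Filter

theorem mem_iff_mem_span'_image_of_supported {k M T : Type*} [Ring k] [Semigroup M]
    [SetLike T (MonoidAlgebra k M)] [NonUnitalSubringClass T (MonoidAlgebra k M)] {S : Set M}
    (hl : ∀ s ∈ S, ∀ u, u * s ∈ S ↔ u ∈ S) (hr : ∀ s ∈ S, ∀ v, s * v ∈ S ↔ v ∈ S)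
    (hlr : ∀ s ∈ S, ∀ u v, u * s * v ∈ S ↔ u ∈ S ∧ v ∈ S)
    {A : T} (hA : ∀ z, z ∈ A ↔ z ∈ supported k k S) (I : TwoSidedIdeal A) (a : A) :
    a ∈ I ↔ (a : MonoidAlgebra k M) ∈ TwoSidedIdeal.span' (Subtype.val '' (I : Set A)) := by
  classical
  have hsupp (a : A) := (hA a).1 a.2
  refine TwoSidedIdeal.mem_iff_mem_span'_image_of_retraction
    ((filterHom S).codRestrict A fun z => (hA _).2 (filterHom_mem_supported z))
    (fun a => Subtype.ext ?_) (fun b a => Subtype.ext ?_) (fun a b => Subtype.ext ?_)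
    (fun b a b' => Subtype.ext ?_) I a
  · exact filterHom_of_mem_supported (hsupp a)
  · exact filterHom_mul_of_mem_supported_right hl (hsupp a) b
  · exact filterHom_mul_of_mem_supported_left hr (hsupp a) b
  · exact filterHom_mul_mul_of_mem_supported hlr (hsupp a) b b'

end MonoidAlgebra

theorem List.replicate_append_cons_inj {α : Type*} {c d : α} (hdc : d ≠ c) {a b : ℕ}
    {t t' : List α} : replicate a c ++ d :: t = replicate b c ++ d :: t' ↔ a = b ∧ t = t' := by
  refine ⟨fun h => ?_, by rintro ⟨rfl, rfl⟩; rfl⟩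
  induction a generalizing b with
  | zero => cases b <;> simp_all [replicate_succ, eq_comm]
  | succ a ih => cases b <;> simp_all [replicate_succ]

theorem List.replicate_append_replicate_ne_append_cons_cons {α : Type*} {x y : α} (hxy : x ≠ y)
    (n m : ℕ) (p q : List α) : replicate n y ++ replicate m x ≠ p ++ x :: y :: q := by
  intro h
  rcases append_eq_append_iff.1 h with ⟨a, -, h'⟩ | ⟨c, h₁, h₂⟩
  · exact hxy (eq_of_mem_replicate (h' ▸ by simp : y ∈ replicate m x)).symm
  · cases c with
    | nil =>
      rw [nil_append] at h₂
      exact hxy (eq_of_mem_replicate (h₂ ▸ by simp : y ∈ replicate m x)).symm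
    | cons e c =>
      obtain rfl : x = e := (cons.inj h₂).1
      exact hxy (eq_of_mem_replicate (by simp [h₁] : x ∈ replicate n y))

namespace FreeSemigroup

variable {α : Type*}

def toList (w : FreeSemigroup α) : List α := w.head :: w.tail

theorem toList_mul (v w : FreeSemigroup α) : (v * w).toList = v.toList ++ w.toList := rfl

theorem toList_of (a : α) : (of a).toList = [a] := rfl

theorem toList_mk (a : α) (l : List α) : (mk a l).toList = a :: l := rfl

theorem toList_injective : Function.Injective (toList (α := α)) := fun _ _ h =>
  FreeSemigroup.ext (List.cons.inj h).1 (List.cons.inj h).2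

theorem toList_ne_nil (w : FreeSemigroup α) : w.toList ≠ [] := List.cons_ne_nil _ _

theorem toList_spow (a : α) {n : ℕ} (hn : 1 ≤ n) :
    (spow (of a) n).toList = List.replicate n a := by
  induction n, hn using Nat.le_induction with
  | base => rfl
  | succ n hn ih =>
    obtain ⟨n, rfl⟩ := Nat.exists_eq_add_of_le' hn
    rw [spow, toList_mul, ih, toList_of, ← List.replicate_succ']

end FreeSemigroup

section Malcev

open FreeSemigroup

variable {X : Type*} {x y : X} {f : ℕ → ℕ}

def malcevCode (x y : X) (f : ℕ → ℕ) (n : ℕ) : List X :=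
  x :: (List.replicate n y ++ List.replicate (f n) x)

def malcevConcat (x y : X) (f : ℕ → ℕ) (ws : List {n : ℕ // 1 ≤ n}) : List X :=
  ws.flatMap (malcevCode x y f ·)

theorem malcevCode_append_inj (hxy : x ≠ y) {n m : ℕ} (hn : 1 ≤ f n) (hm : 1 ≤ f m)
    {t t' : List X} : malcevCode x y f n ++ t = malcevCode x y f m ++ t' ↔ n = m ∧ t = t' := by
  refine ⟨fun h => ?_, by rintro ⟨rfl, rfl⟩; rfl⟩
  obtain ⟨n', hn'⟩ := Nat.exists_eq_add_of_le' hn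
  obtain ⟨m', hm'⟩ := Nat.exists_eq_add_of_le' hm
  simp only [malcevCode, hn', hm', List.replicate_succ, List.cons_append, List.append_assoc,
    List.cons.injEq, true_and, List.replicate_append_cons_inj hxy] at h
  obtain ⟨rfl, h⟩ := h
  exact ⟨rfl, List.append_cancel_left (by rwa [show n' = m' by omega] at h)⟩

theorem malcevCode_append_eq_append_cons_cons (hxy : x ≠ y) {n : ℕ} {r p q : List X}
    (hp : p ≠ []) (hr : ∀ q', r ≠ y :: q')
    (h : malcevCode x y f n ++ r = p ++ x :: y :: q) :
    ∃ p', p = malcevCode x y f n ++ p' ∧ r = p' ++ x :: y :: q := by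
  obtain ⟨e, p, rfl⟩ := List.exists_cons_of_ne_nil hp
  simp only [malcevCode, List.cons_append, List.cons.injEq] at h
  obtain ⟨rfl, h⟩ := h
  rcases List.append_eq_append_iff.1 h with ⟨a, rfl, rfl⟩ | ⟨c, h₁, h₂⟩
  · exact ⟨a, by simp [malcevCode], rfl⟩
  · match c, h₂ with
    | [], h₂ => exact ⟨[], by simp [malcevCode, h₁], h₂.symm⟩
    | [_], h₂ => exact absurd (List.cons.inj h₂).2.symm (hr q)
    | _ :: _ :: c, h₂ =>
      obtain ⟨rfl, rfl, rfl⟩ : _ ∧ _ ∧ _ := by simpa using h₂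
      exact absurd h₁ (List.replicate_append_replicate_ne_append_cons_cons hxy _ _ _ _)

theorem malcevConcat_cons (i : {n : ℕ // 1 ≤ n}) (ws : List {n : ℕ // 1 ≤ n}) :
    malcevConcat x y f (i :: ws) = malcevCode x y f i ++ malcevConcat x y f ws :=
  List.flatMap_cons

theorem malcevConcat_ne_cons (hxy : x ≠ y) (ws : List {n : ℕ // 1 ≤ n}) (q : List X) :
    malcevConcat x y f ws ≠ y :: q := by
  cases ws with
  | nil => simp [malcevConcat]
  | cons i ws => simp [malcevConcat_cons, malcevCode, hxy]

theorem malcevConcat_eq_nil_iff {ws : List {n : ℕ // 1 ≤ n}} :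
    malcevConcat x y f ws = [] ↔ ws = [] := by
  cases ws <;> simp [malcevConcat, malcevCode]

theorem exists_malcevConcat_of_malcevConcat_eq_append_cons_cons (hxy : x ≠ y)
    {ws : List {n : ℕ // 1 ≤ n}} {p q : List X} (h : malcevConcat x y f ws = p ++ x :: y :: q) :
    ∃ ws₁ ws₂, p = malcevConcat x y f ws₁ ∧ x :: y :: q = malcevConcat x y f ws₂ := by
  induction ws generalizing p with
  | nil => simp [malcevConcat] at h
  | cons i ws ih =>
    rcases eq_or_ne p [] with rfl | hp
    · exact ⟨[], i :: ws, rfl, h.symm⟩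
    rw [malcevConcat_cons] at h
    obtain ⟨p', rfl, h'⟩ :=
      malcevCode_append_eq_append_cons_cons hxy hp (malcevConcat_ne_cons hxy ws) h
    obtain ⟨ws₁, ws₂, rfl, h₂⟩ := ih h'
    exact ⟨i :: ws₁, ws₂, (malcevConcat_cons i ws₁).symm, h₂⟩

theorem exists_malcevConcat_of_malcevConcat_append_eq (hxy : x ≠ y)
    (hf : ∀ n, 1 ≤ n → 1 ≤ f n) {ws ws' : List {n : ℕ // 1 ≤ n}} {t : List X}
    (h : malcevConcat x y f ws ++ t = malcevConcat x y f ws') :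
    ∃ ws₂, ws' = ws ++ ws₂ ∧ t = malcevConcat x y f ws₂ := by
  induction ws generalizing ws' with
  | nil => exact ⟨ws', rfl, h⟩
  | cons i ws ih =>
    cases ws' with
    | nil => simp [malcevConcat, malcevCode] at h
    | cons j ws' =>
      rw [malcevConcat_cons, malcevConcat_cons, List.append_assoc,
        malcevCode_append_inj hxy (hf i i.2) (hf j j.2)] at h
      obtain ⟨ws₂, rfl, rfl⟩ := ih h.2
      exact ⟨ws₂, by rw [Subtype.ext h.1]; rfl, rfl⟩

theorem malcevConcat_injective (hxy : x ≠ y) (hf : ∀ n, 1 ≤ n → 1 ≤ f n) :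
    Function.Injective (malcevConcat x y f) := fun ws ws' h => by
  obtain ⟨ws₂, rfl, h₂⟩ :=
    exists_malcevConcat_of_malcevConcat_append_eq hxy hf (ws := ws) (ws' := ws') (t := [])
      (by rwa [List.append_nil])
  rw [eq_comm, malcevConcat_eq_nil_iff] at h₂
  simp [h₂]

def malcevSemigroupHom (x y : X) (f : ℕ → ℕ) :
    FreeSemigroup {n : ℕ // 1 ≤ n} →ₙ* FreeSemigroup X :=
  FreeSemigroup.lift fun p => malcevWord x y f p

theorem toList_malcevWord {n : ℕ} (hn : 1 ≤ n) (hfn : 1 ≤ f n) :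
    (malcevWord x y f n).toList = malcevCode x y f n := by
  simp [malcevWord, malcevCode, toList_mul, toList_of, toList_spow _ hn, toList_spow _ hfn]

theorem toList_malcevSemigroupHom (hf : ∀ n, 1 ≤ n → 1 ≤ f n)
    (w : FreeSemigroup {n : ℕ // 1 ≤ n}) :
    (malcevSemigroupHom x y f w).toList = malcevConcat x y f w.toList := by
  induction w with
  | ih1 i =>
    simp [malcevSemigroupHom, toList_malcevWord i.2 (hf i i.2), toList_of, malcevConcat]
  | ih2 i w _ ih =>
    rw [map_mul, toList_mul, ih, toList_mul, toList_of, List.singleton_append, malcevConcat_cons,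
      malcevSemigroupHom, lift_of, toList_malcevWord i.2 (hf i i.2)]

theorem mem_range_malcevSemigroupHom_iff (hf : ∀ n, 1 ≤ n → 1 ≤ f n) {g : FreeSemigroup X} :
    g ∈ Set.range (malcevSemigroupHom x y f) ↔ ∃ ws, g.toList = malcevConcat x y f ws := by
  refine ⟨fun ⟨w, hw⟩ => ⟨w.toList, hw ▸ toList_malcevSemigroupHom hf w⟩, fun ⟨ws, hws⟩ => ?_⟩
  cases ws with
  | nil => exact absurd hws g.toList_ne_nil
  | cons i ws =>
    exact ⟨mk i ws, toList_injective (by rw [toList_malcevSemigroupHom hf, hws, toList_mk])⟩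

theorem exists_toList_malcevSemigroupHom_eq_cons_cons (hf : ∀ n, 1 ≤ n → 1 ≤ f n)
    (w : FreeSemigroup {n : ℕ // 1 ≤ n}) :
    ∃ q, (malcevSemigroupHom x y f w).toList = x :: y :: q := by
  obtain ⟨n, hn⟩ := Nat.exists_eq_add_of_le' w.head.2
  exact ⟨_, by rw [toList_malcevSemigroupHom hf, toList, malcevConcat_cons, malcevCode, hn,
    List.replicate_succ]; rfl⟩

theorem malcevSemigroupHom_injective (hxy : x ≠ y) (hf : ∀ n, 1 ≤ n → 1 ≤ f n) :
    Function.Injective (malcevSemigroupHom x y f) := fun v w h =>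
  toList_injective <| malcevConcat_injective hxy hf <| by
    rw [← toList_malcevSemigroupHom hf, ← toList_malcevSemigroupHom hf, h]

theorem mem_range_malcevSemigroupHom_of_mul_mem (hxy : x ≠ y) (hf : ∀ n, 1 ≤ n → 1 ≤ f n)
    {u s : FreeSemigroup X} (hs : ∃ q, s.toList = x :: y :: q)
    (h : u * s ∈ Set.range (malcevSemigroupHom x y f)) :
    u ∈ Set.range (malcevSemigroupHom x y f) ∧ s ∈ Set.range (malcevSemigroupHom x y f) := by
  obtain ⟨q, hq⟩ := hs
  obtain ⟨ws, hws⟩ := (mem_range_malcevSemigroupHom_iff hf).1 h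
  rw [toList_mul, hq] at hws
  obtain ⟨ws₁, ws₂, hu, hs⟩ :=
    exists_malcevConcat_of_malcevConcat_eq_append_cons_cons hxy hws.symm
  exact ⟨(mem_range_malcevSemigroupHom_iff hf).2 ⟨ws₁, hu⟩,
    (mem_range_malcevSemigroupHom_iff hf).2 ⟨ws₂, hq.trans hs⟩⟩

theorem mul_mem_range_malcevSemigroupHom_iff_left (hxy : x ≠ y) (hf : ∀ n, 1 ≤ n → 1 ≤ f n)
    {s : FreeSemigroup X} (hs : s ∈ Set.range (malcevSemigroupHom x y f)) (u : FreeSemigroup X) :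
    u * s ∈ Set.range (malcevSemigroupHom x y f) ↔ u ∈ Set.range (malcevSemigroupHom x y f) := by
  obtain ⟨w, rfl⟩ := hs
  refine ⟨fun h => (mem_range_malcevSemigroupHom_of_mul_mem hxy hf
    (exists_toList_malcevSemigroupHom_eq_cons_cons hf w) h).1, ?_⟩
  rintro ⟨w', rfl⟩
  exact ⟨w' * w, map_mul ..⟩

theorem mul_mem_range_malcevSemigroupHom_iff_right (hxy : x ≠ y) (hf : ∀ n, 1 ≤ n → 1 ≤ f n)
    {s : FreeSemigroup X} (hs : s ∈ Set.range (malcevSemigroupHom x y f)) (v : FreeSemigroup X) :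
    s * v ∈ Set.range (malcevSemigroupHom x y f) ↔ v ∈ Set.range (malcevSemigroupHom x y f) := by
  refine ⟨fun h => ?_, ?_⟩
  · obtain ⟨ws, hws⟩ := (mem_range_malcevSemigroupHom_iff hf).1 hs
    obtain ⟨ws', hws'⟩ := (mem_range_malcevSemigroupHom_iff hf).1 h
    rw [toList_mul, hws] at hws'
    obtain ⟨ws₂, -, hv⟩ := exists_malcevConcat_of_malcevConcat_append_eq hxy hf hws'
    exact (mem_range_malcevSemigroupHom_iff hf).2 ⟨ws₂, hv⟩
  · obtain ⟨w, rfl⟩ := hs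
    rintro ⟨w', rfl⟩
    exact ⟨w * w', map_mul ..⟩

theorem mul_mul_mem_range_malcevSemigroupHom_iff (hxy : x ≠ y) (hf : ∀ n, 1 ≤ n → 1 ≤ f n)
    {s : FreeSemigroup X} (hs : s ∈ Set.range (malcevSemigroupHom x y f))
    (u v : FreeSemigroup X) :
    u * s * v ∈ Set.range (malcevSemigroupHom x y f) ↔
      u ∈ Set.range (malcevSemigroupHom x y f) ∧ v ∈ Set.range (malcevSemigroupHom x y f) := by
  refine ⟨fun h => ?_, fun ⟨hu, hv⟩ => ?_⟩
  · obtain ⟨w, rfl⟩ := hs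
    obtain ⟨q, hq⟩ := exists_toList_malcevSemigroupHom_eq_cons_cons hf w
    rw [mul_assoc] at h
    obtain ⟨hu, hsv⟩ := mem_range_malcevSemigroupHom_of_mul_mem hxy hf
      ⟨q ++ v.toList, by rw [toList_mul, hq]; rfl⟩ h
    exact ⟨hu, (mul_mem_range_malcevSemigroupHom_iff_right hxy hf ⟨w, rfl⟩ v).1 hsv⟩
  · rw [← mul_mem_range_malcevSemigroupHom_iff_left hxy hf hs] at hu
    exact (mul_mem_range_malcevSemigroupHom_iff_right hxy hf hu v).2 hv

section Algebra

variable {k : Type*} [CommRing k]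

theorem single_malcevSemigroupHom_mem_malcevSubalgebra (w : FreeSemigroup {n : ℕ // 1 ≤ n})
    (c : k) : MonoidAlgebra.single (malcevSemigroupHom x y f w) c ∈ malcevSubalgebra k x y f := by
  induction w generalizing c with
  | ih1 i =>
    rw [← mul_one c, ← MonoidAlgebra.smul_single']
    exact SMulMemClass.smul_mem c (NonUnitalAlgebra.subset_adjoin k ⟨i, i.2, rfl⟩)
  | ih2 i w hi hw =>
    rw [map_mul, ← mul_one c, ← MonoidAlgebra.single_mul_single]
    exact mul_mem (hi c) (hw 1)

theorem range_malcevHom_subset_supported :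
    Set.range (malcevHom k x y f) ⊆
      MonoidAlgebra.supported k k (Set.range (malcevSemigroupHom x y f)) := by
  classical
  rintro _ ⟨z, rfl⟩ g hg
  obtain ⟨w, -, rfl⟩ := Finset.mem_image.1 (Finsupp.mapDomain_support hg)
  exact ⟨w, rfl⟩

theorem supported_le_malcevSubalgebra :
    MonoidAlgebra.supported k k (Set.range (malcevSemigroupHom x y f)) ≤
      (malcevSubalgebra k x y f).toSubmodule := by
  rw [MonoidAlgebra.supported_eq_span_single, Submodule.span_le]
  rintro _ ⟨_, ⟨w, rfl⟩, rfl⟩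
  exact single_malcevSemigroupHom_mem_malcevSubalgebra w 1

theorem malcevSubalgebra_le_range :
    malcevSubalgebra k x y f ≤
      NonUnitalAlgHom.range
        (MonoidAlgebra.mapDomainNonUnitalAlgHom k k (malcevSemigroupHom x y f)) := by
  refine NonUnitalAlgebra.adjoin_le ?_
  rintro _ ⟨n, hn, rfl⟩
  exact ⟨MonoidAlgebra.single (FreeSemigroup.of ⟨n, hn⟩) 1, MonoidAlgebra.mapDomain_single⟩

theorem mem_malcevSubalgebra_iff_mem_supported {z : MonoidAlgebra k (FreeSemigroup X)} :
    z ∈ malcevSubalgebra k x y f ↔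
      z ∈ MonoidAlgebra.supported k k (Set.range (malcevSemigroupHom x y f)) :=
  ⟨fun hz => range_malcevHom_subset_supported
      ((NonUnitalAlgHom.mem_range _).1 (malcevSubalgebra_le_range hz)),
    fun hz => supported_le_malcevSubalgebra hz⟩

theorem range_malcevHom :
    Set.range (malcevHom k x y f) =
      (malcevSubalgebra k x y f : Set (MonoidAlgebra k (FreeSemigroup X))) :=
  (range_malcevHom_subset_supported.trans fun _ =>
      mem_malcevSubalgebra_iff_mem_supported.2).antisymm
    fun _ hz => (NonUnitalAlgHom.mem_range _).1 (malcevSubalgebra_le_range hz)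

end Algebra

end Malcev

theorem malcev_shirshov_free_and_ideal_extension_general
    (k : Type*) [CommRing k] (X : Type*) (x y : X) (hxy : x ≠ y)
    (f : ℕ → ℕ) (hf : ∀ n, 1 ≤ n → 1 ≤ f n) :
    Function.Injective (malcevHom k x y f) ∧
    Set.range (malcevHom k x y f)
      = (malcevSubalgebra k x y f : Set (MonoidAlgebra k (FreeSemigroup X))) ∧
    ∀ I : TwoSidedIdeal (malcevSubalgebra k x y f),
      ∀ a : malcevSubalgebra k x y f,
        a ∈ I ↔ (a : MonoidAlgebra k (FreeSemigroup X)) ∈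
          TwoSidedIdeal.span'
            (Subtype.val '' (I : Set (malcevSubalgebra k x y f))) :=
  ⟨MonoidAlgebra.mapDomain_injective (malcevSemigroupHom_injective hxy hf), range_malcevHom,
    MonoidAlgebra.mem_iff_mem_span'_image_of_supported
      (fun _ hs => mul_mem_range_malcevSemigroupHom_iff_left hxy hf hs)
      (fun _ hs => mul_mem_range_malcevSemigroupHom_iff_right hxy hf hs)
      (fun _ hs => mul_mul_mem_range_malcevSemigroupHom_iff hxy hf hs)
      fun _ => mem_malcevSubalgebra_iff_mem_supported⟩

/-- Let `B` be the free nonunital associative `k`-algebra on two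
generators `x ≠ y`, and `A ⊆ B` the nonunital subalgebra generated by the monomials
`x * yⁿ * x^(f n)`, `n ≥ 1`, where `f` maps positive integers to positive integers.
Then `A` is free on this family of monomials (the natural homomorphism from the free
nonunital associative `k`-algebra on countably many generators is injective with
image `A`), and `A` has the ideal extension property in `B`. -/
theorem malcev_shirshov_free_and_ideal_extension
    (k : Type*) [CommRing k] (X : Type*) (x y : X) (hxy : x ≠ y)
    (hX : ∀ a : X, a = x ∨ a = y)
    (f : ℕ → ℕ) (hf : ∀ n, 1 ≤ n → 1 ≤ f n) :
    Function.Injective (malcevHom k x y f) ∧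
    Set.range (malcevHom k x y f)
      = (malcevSubalgebra k x y f : Set (MonoidAlgebra k (FreeSemigroup X))) ∧
    ∀ I : TwoSidedIdeal (malcevSubalgebra k x y f),
      ∀ a : malcevSubalgebra k x y f,
        a ∈ I ↔ (a : MonoidAlgebra k (FreeSemigroup X)) ∈
          TwoSidedIdeal.span'
            (Subtype.val '' (I : Set (malcevSubalgebra k x y f))) :=
  malcev_shirshov_free_and_ideal_extension_general k X x y hxy f hf
end

section
/- Let k be a nontrivial commutative ring, let B = k⟨x, y⟩ be the free associative unital k-algebra on two generators x and y, and let A be the unital k-subalgebra of B generated by the monomials x * y^n * x for n ≥ 1. Let I be the two-sided ideal of A generated by the two elements x*y*x and x*y^2*x − 1. Then I is a proper ideal of A (it does not contain 1), but the two-sided ideal of B generated by I is all of B. -/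
/-- The monomial `x * yⁿ * x` in the free associative unital `k`-algebra on `X`,
realized as the monoid algebra of the free monoid on `X`. -/
noncomputable def xyxMonomial (k : Type*) [CommRing k] {X : Type*} (x y : X)
    (n : ℕ) : MonoidAlgebra k (FreeMonoid X) :=
  MonoidAlgebra.of k (FreeMonoid X)
    (FreeMonoid.of x * (FreeMonoid.of y) ^ n * FreeMonoid.of x)

/-- The unital `k`-subalgebra of `k⟨X⟩` generated by the monomials `x * yⁿ * x`,
`n ≥ 1`. -/
noncomputable def xyxSubalgebra (k : Type*) [CommRing k] {X : Type*} (x y : X) :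
    Subalgebra k (MonoidAlgebra k (FreeMonoid X)) :=
  Algebra.adjoin k {m | ∃ n, 1 ≤ n ∧ m = xyxMonomial k x y n}

/-- `x * y * x` as an element of the subalgebra generated by the `x * yⁿ * x`. -/
noncomputable def xyxElt (k : Type*) [CommRing k] {X : Type*} (x y : X) :
    xyxSubalgebra k x y :=
  ⟨xyxMonomial k x y 1, Algebra.subset_adjoin ⟨1, le_rfl, rfl⟩⟩

/-- `x * y² * x` as an element of the subalgebra generated by the `x * yⁿ * x`. -/
noncomputable def xyyxElt (k : Type*) [CommRing k] {X : Type*} (x y : X) :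
    xyxSubalgebra k x y :=
  ⟨xyxMonomial k x y 2, Algebra.subset_adjoin ⟨2, one_le_two, rfl⟩⟩

namespace IEP

variable {X : Type*} (x y : X)

/-- The word `x yⁿ x` in the free monoid. -/
def W (n : ℕ) : FreeMonoid X := FreeMonoid.of x * FreeMonoid.of y ^ n * FreeMonoid.of x

/-- The generating words. -/
def Sw : Set (FreeMonoid X) := {m | ∃ n, 1 ≤ n ∧ m = W x y n}

/-- The submonoid of words generated by the `W n`. -/
def N : Submonoid (FreeMonoid X) := Submonoid.closure (Sw x y)

lemma toList_pow (a : X) (n : ℕ) :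
    (FreeMonoid.of a ^ n).toList = List.replicate n a := by
  induction n with
  | zero => rfl
  | succ n ih =>
    rw [pow_succ', FreeMonoid.toList_mul, FreeMonoid.toList_of, ih, List.replicate_succ]
    rfl

lemma toList_W (n : ℕ) : (W x y n).toList = x :: (List.replicate n y ++ [x]) := by
  simp [W, FreeMonoid.toList_mul, FreeMonoid.toList_of, toList_pow]

lemma length_W_pow (r : ℕ) : ((W x y 2) ^ r).toList.length = 4 * r := by
  induction r with
  | zero => rfl
  | succ r ih =>
    rw [pow_succ, FreeMonoid.toList_mul, List.length_append, ih, toList_W]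
    simp; omega

lemma W_mul_ne_one (n : ℕ) (s : FreeMonoid X) : W x y n * s ≠ 1 := by
  intro h
  have := congrArg (fun l : FreeMonoid X => l.toList.length) h
  simp [FreeMonoid.toList_mul, toList_W, FreeMonoid.toList_one] at this

lemma cancel (hxy : x ≠ y) {n : ℕ} (hn : 1 ≤ n) {s t : FreeMonoid X}
    (h : W x y n * s = W x y 2 * t) : n = 2 ∧ s = t := by
  obtain ⟨m, rfl⟩ : ∃ m, n = m + 1 := ⟨n - 1, by omega⟩
  have h' : (W x y (m + 1) * s).toList = (W x y 2 * t).toList := congrArg _ h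
  rw [FreeMonoid.toList_mul, FreeMonoid.toList_mul, toList_W, toList_W] at h'
  match m with
  | 0 =>
    simp [List.replicate_succ] at h'
    exact absurd h'.1 hxy
  | 1 =>
    simp [List.replicate_succ] at h'
    exact ⟨rfl, FreeMonoid.toList.injective h'⟩
  | (m + 2) =>
    simp [List.replicate_succ] at h'
    rcases m with _ | m
    · exact absurd h'.1.symm hxy
    · simp [List.replicate_succ] at h'
      exact absurd h'.1.symm hxy

end IEP

namespace IEP

variable {X : Type*} (x y : X)

lemma factor {u : FreeMonoid X} (hu : u ∈ N x y) :
    u = 1 ∨ ∃ n, 1 ≤ n ∧ ∃ u', u' ∈ N x y ∧ u = W x y n * u' := by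
  induction hu using Submonoid.closure_induction with
  | mem m hm =>
    obtain ⟨n, hn, rfl⟩ := hm
    exact Or.inr ⟨n, hn, 1, one_mem _, (mul_one _).symm⟩
  | one => exact Or.inl rfl
  | mul a b ha hb iha ihb =>
    rcases iha with rfl | ⟨n, hn, u', hu', rfl⟩
    · rw [one_mul]; exact ihb
    · exact Or.inr ⟨n, hn, u' * b, mul_mem hu' hb, by rw [mul_assoc]⟩

lemma main (hxy : x ≠ y) :
    ∀ L : ℕ, ∀ u : FreeMonoid X, u ∈ N x y → ∀ v : FreeMonoid X, v ∈ N x y → u.toList.length ≤ L →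
      (∃ r : ℕ, u * v = W x y 2 ^ r) →
      (∃ r : ℕ, u = W x y 2 ^ r) ∧ (∃ r : ℕ, v = W x y 2 ^ r) := by
  intro L
  induction L with
  | zero =>
    intro u hu v hv hlen hr
    have hu1 : u = 1 := FreeMonoid.toList.injective (List.length_eq_zero_iff.1 (by omega))
    subst hu1
    exact ⟨⟨0, (pow_zero _).symm⟩, by simpa using hr⟩
  | succ L ih =>
    intro u hu v hv hlen hr
    rcases factor x y hu with rfl | ⟨n, hn, u', hu', rfl⟩
    · exact ⟨⟨0, (pow_zero _).symm⟩, by simpa using hr⟩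
    · obtain ⟨r, hr⟩ := hr
      rcases r with _ | r
      · rw [pow_zero, mul_assoc] at hr
        exact absurd hr (W_mul_ne_one x y n _)
      · rw [pow_succ', mul_assoc] at hr
        obtain ⟨hn2, h2⟩ := cancel x y hxy hn hr
        subst hn2
        have hlen' : u'.toList.length ≤ L := by
          have := hlen
          rw [FreeMonoid.toList_mul, List.length_append, toList_W] at this
          simp at this; omega
        obtain ⟨⟨a, ha⟩, hv2⟩ := ih u' hu' v hv hlen' ⟨r, h2⟩
        exact ⟨⟨a + 1, by rw [ha, pow_succ']⟩, hv2⟩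

end IEP

namespace IEP

variable (k : Type*) [CommRing k] {X : Type*} (x y : X)

open Classical in
/-- The "evaluation" sending a word to 1 if it is a power of `x y² x`, else 0. -/
noncomputable def f (u : FreeMonoid X) : k :=
  if ∃ r : ℕ, u = W x y 2 ^ r then 1 else 0

lemma f_one : f k x y 1 = 1 := by
  rw [f, if_pos ⟨0, (pow_zero _).symm⟩]

lemma f_W2 : f k x y (W x y 2) = 1 := by
  rw [f, if_pos ⟨1, (pow_one _).symm⟩]

lemma f_W1 : f k x y (W x y 1) = 0 := by
  rw [f, if_neg]
  rintro ⟨r, hr⟩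
  have := congrArg (fun l : FreeMonoid X => l.toList.length) hr
  simp only [length_W_pow, toList_W] at this
  simp at this
  omega

lemma f_mul (hxy : x ≠ y) {u v : FreeMonoid X} (hu : u ∈ N x y) (hv : v ∈ N x y) :
    f k x y (u * v) = f k x y u * f k x y v := by
  classical
  by_cases h : ∃ r : ℕ, u * v = W x y 2 ^ r
  · obtain ⟨h1, h2⟩ := main x y hxy u.toList.length u hu v hv le_rfl h
    simp [f, h, h1, h2]
  · rw [f, if_neg h]
    by_cases hu' : ∃ r : ℕ, u = W x y 2 ^ r
    · have hv' : ¬ ∃ r : ℕ, v = W x y 2 ^ r := by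
        rintro ⟨b, rfl⟩
        obtain ⟨a, rfl⟩ := hu'
        exact h ⟨a + b, (pow_add _ _ _).symm⟩
      simp [f, h, hv']
    · simp [f, h, hu']

/-- The linear functional extending `f`. -/
noncomputable def Phi : MonoidAlgebra k (FreeMonoid X) →ₗ[k] k :=
  Finsupp.linearCombination k (f k x y) ∘ₗ
    (MonoidAlgebra.coeffLinearEquiv k : MonoidAlgebra k (FreeMonoid X) ≃ₗ[k] _).toLinearMap

lemma Phi_of (w : FreeMonoid X) :
    Phi k x y (MonoidAlgebra.of k (FreeMonoid X) w) = f k x y w := by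
  show Finsupp.linearCombination k (f k x y) (Finsupp.single w 1) = f k x y w
  rw [Finsupp.linearCombination_single, one_smul]

lemma Phi_one : Phi k x y (1 : MonoidAlgebra k (FreeMonoid X)) = 1 := by
  have := Phi_of k x y 1
  rw [map_one] at this
  rw [this, f_one]

end IEP

namespace IEP

variable (k : Type*) [CommRing k] {X : Type*} (x y : X)

lemma closure_image :
    Submonoid.closure {m | ∃ n, 1 ≤ n ∧ m = xyxMonomial k x y n}
      = (N x y).map (MonoidAlgebra.of k (FreeMonoid X)) := by
  rw [N, MonoidHom.map_mclosure]
  congr 1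
  ext b
  constructor
  · rintro ⟨n, hn, rfl⟩
    exact ⟨W x y n, ⟨n, hn, rfl⟩, rfl⟩
  · rintro ⟨w, ⟨n, hn, rfl⟩, rfl⟩
    exact ⟨n, hn, rfl⟩

lemma Phi_mul (hxy : x ≠ y) {a b : MonoidAlgebra k (FreeMonoid X)}
    (ha : a ∈ xyxSubalgebra k x y) (hb : b ∈ xyxSubalgebra k x y) :
    Phi k x y (a * b) = Phi k x y a * Phi k x y b := by
  have ha' : a ∈ Submodule.span k
      (((N x y).map (MonoidAlgebra.of k (FreeMonoid X)) : Submonoid _) : Set _) := by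
    rw [← closure_image, ← Algebra.adjoin_eq_span]; exact ha
  have hb' : b ∈ Submodule.span k
      (((N x y).map (MonoidAlgebra.of k (FreeMonoid X)) : Submonoid _) : Set _) := by
    rw [← closure_image, ← Algebra.adjoin_eq_span]; exact hb
  clear ha hb
  induction ha', hb' using Submodule.span_induction₂ with
  | mem_mem a b ha hb =>
    obtain ⟨u, hu, rfl⟩ := ha
    obtain ⟨v, hv, rfl⟩ := hb
    rw [← map_mul, Phi_of, Phi_of, Phi_of, f_mul k x y hxy hu hv]
  | zero_left b hb => simp
  | zero_right a ha => simp
  | add_left a a' b ha ha' hb h1 h2 =>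
    rw [add_mul, map_add, map_add, add_mul, h1, h2]
  | add_right a b b' ha hb hb' h1 h2 =>
    rw [mul_add, map_add, map_add, mul_add, h1, h2]
  | smul_left r a b ha hb h =>
    rw [smul_mul_assoc, map_smul, map_smul, smul_mul_assoc, h]
  | smul_right r a b ha hb h =>
    rw [mul_smul_comm, map_smul, map_smul, mul_smul_comm, h]

end IEP

namespace IEP

variable (k : Type*) [CommRing k] {X : Type*} (x y : X)

/-- The kernel of `Phi`, restricted to the subalgebra, as a two-sided ideal. -/
noncomputable def T (hxy : x ≠ y) : TwoSidedIdeal (xyxSubalgebra k x y) :=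
  TwoSidedIdeal.mk' {a | Phi k x y a.1 = 0}
    (by simp)
    (fun {a b} ha hb => by
      simp only [Set.mem_setOf_eq] at ha hb ⊢
      rw [Subalgebra.coe_add, map_add, ha, hb, add_zero])
    (fun {a} ha => by
      simp only [Set.mem_setOf_eq] at ha ⊢
      rw [Subalgebra.coe_neg, map_neg, ha, neg_zero])
    (fun {a b} hb => by
      simp only [Set.mem_setOf_eq] at hb ⊢
      rw [Subalgebra.coe_mul, Phi_mul k x y hxy a.2 b.2, hb, mul_zero])
    (fun {a b} ha => by
      simp only [Set.mem_setOf_eq] at ha ⊢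
      rw [Subalgebra.coe_mul, Phi_mul k x y hxy a.2 b.2, ha, zero_mul])

lemma mem_T (hxy : x ≠ y) (a : xyxSubalgebra k x y) :
    a ∈ T k x y hxy ↔ Phi k x y a.1 = 0 :=
  TwoSidedIdeal.mem_mk' _ _ _ _ _ _ a

lemma xyxMonomial_eq (n : ℕ) :
    xyxMonomial k x y n = MonoidAlgebra.of k (FreeMonoid X) (W x y n) := rfl

end IEP


/-- Let `k` be a nontrivial commutative ring, `B = k⟨x, y⟩` the
free associative unital `k`-algebra on two generators `x ≠ y`, and `A` the unital
subalgebra generated by the monomials `x * yⁿ * x`, `n ≥ 1`.  Let `I` be the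
two-sided ideal of `A` generated by `x*y*x` and `x*y²*x - 1`.  Then `I` is proper
(it does not contain `1`), but the two-sided ideal of `B` generated by `I` is all
of `B`. -/
theorem unital_subalgebra_fails_ideal_extension
    (k : Type*) [CommRing k] [Nontrivial k]
    (X : Type*) (x y : X) (hxy : x ≠ y) (hX : ∀ a : X, a = x ∨ a = y) :
    (1 : xyxSubalgebra k x y) ∉
      TwoSidedIdeal.span' {xyxElt k x y, xyyxElt k x y - 1} ∧
    TwoSidedIdeal.span'
      (Subtype.val ''
        ((TwoSidedIdeal.span' {xyxElt k x y, xyyxElt k x y - 1} :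
            TwoSidedIdeal (xyxSubalgebra k x y)) : Set (xyxSubalgebra k x y)))
      = (⊤ : TwoSidedIdeal (MonoidAlgebra k (FreeMonoid X))) := by
  open IEP in
  constructor
  · intro h1
    have hsub : TwoSidedIdeal.span' {xyxElt k x y, xyyxElt k x y - 1}
        ≤ IEP.T k x y hxy := by
      apply sInf_le
      intro a ha
      rcases ha with rfl | rfl
      · rw [SetLike.mem_coe, IEP.mem_T]
        show IEP.Phi k x y (xyxMonomial k x y 1) = 0
        rw [IEP.xyxMonomial_eq, IEP.Phi_of, IEP.f_W1]
      · rw [SetLike.mem_coe, IEP.mem_T]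
        show IEP.Phi k x y ((xyyxElt k x y - 1 : xyxSubalgebra k x y) : _) = 0
        rw [Subalgebra.coe_sub, Subalgebra.coe_one, map_sub, IEP.Phi_one]
        show IEP.Phi k x y (xyxMonomial k x y 2) - 1 = 0
        rw [IEP.xyxMonomial_eq, IEP.Phi_of, IEP.f_W2, sub_self]
    have := (IEP.mem_T k x y hxy 1).1 (hsub h1)
    rw [Subalgebra.coe_one, IEP.Phi_one] at this
    exact one_ne_zero this
  · apply (TwoSidedIdeal.one_mem_iff _).1
    set J := TwoSidedIdeal.span'
      (Subtype.val ''
        ((TwoSidedIdeal.span' {xyxElt k x y, xyyxElt k x y - 1} :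
            TwoSidedIdeal (xyxSubalgebra k x y)) : Set (xyxSubalgebra k x y)))
      with hJ
    have hsub : (Subtype.val ''
        ((TwoSidedIdeal.span' {xyxElt k x y, xyyxElt k x y - 1} :
            TwoSidedIdeal (xyxSubalgebra k x y)) : Set (xyxSubalgebra k x y)))
        ⊆ (J : Set (MonoidAlgebra k (FreeMonoid X))) := fun a ha =>
      (TwoSidedIdeal.mem_sInf _).2 fun I hI => hI ha
    have hg1 : xyxElt k x y ∈ TwoSidedIdeal.span'
        {xyxElt k x y, xyyxElt k x y - 1} :=
      (TwoSidedIdeal.mem_sInf _).2 fun I hI => hI (Set.mem_insert _ _)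
    have hg2 : xyyxElt k x y - 1 ∈ TwoSidedIdeal.span'
        {xyxElt k x y, xyyxElt k x y - 1} :=
      (TwoSidedIdeal.mem_sInf _).2 fun I hI => hI (Set.mem_insert_of_mem _ rfl)
    have hp1 : xyxMonomial k x y 1 ∈ J := hsub ⟨_, hg1, rfl⟩
    have hq : xyxMonomial k x y 2 - 1 ∈ J := by
      have h := hsub ⟨_, hg2, rfl⟩
      rwa [Subalgebra.coe_sub, Subalgebra.coe_one] at h
    have key : (1 : MonoidAlgebra k (FreeMonoid X)) =
        xyxMonomial k x y 1 * MonoidAlgebra.of k (FreeMonoid X)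
            (FreeMonoid.of y * FreeMonoid.of y * FreeMonoid.of x *
              FreeMonoid.of y * FreeMonoid.of x)
        - MonoidAlgebra.of k (FreeMonoid X) (FreeMonoid.of x * FreeMonoid.of y) *
            (xyxMonomial k x y 2 - 1) *
            MonoidAlgebra.of k (FreeMonoid X) (FreeMonoid.of y * FreeMonoid.of x)
        - (xyxMonomial k x y 2 - 1) := by
      have e1 : (FreeMonoid.of x * FreeMonoid.of y ^ 1 * FreeMonoid.of x) *
          (FreeMonoid.of y * FreeMonoid.of y * FreeMonoid.of x *
            FreeMonoid.of y * FreeMonoid.of x) =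
          (FreeMonoid.of x * FreeMonoid.of y) *
            (FreeMonoid.of x * FreeMonoid.of y ^ 2 * FreeMonoid.of x) *
            (FreeMonoid.of y * FreeMonoid.of x) := by
        simp [pow_succ, mul_assoc]
      have e2 : (FreeMonoid.of x * FreeMonoid.of y) *
          (FreeMonoid.of y * FreeMonoid.of x) =
          FreeMonoid.of x * FreeMonoid.of y ^ 2 * FreeMonoid.of x := by
        simp [pow_succ, mul_assoc]
      simp only [xyxMonomial, ← map_mul, mul_sub, sub_mul, one_mul, mul_one]
      rw [e1, e2]
      abel
    rw [key]
    exact J.sub_mem (J.sub_mem (J.mul_mem_right _ _ hp1)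
      (J.mul_mem_right _ _ (J.mul_mem_left _ _ hq))) hq
end

section
/- Let k be a commutative ring and let M be a k-module which is k-linearly isomorphic to the direct sum of countably infinitely many copies of itself (i.e., there is a k-linear isomorphism M ≅ ⨁_{i ∈ ℕ} M). Then for every sequence s_0, s_1, s_2, ... of k-module endomorphisms of M, there exist k-module endomorphisms x, y, z of M such that x ∘ y^n ∘ z = s_n for every natural number n (where y^n denotes the n-fold composite of y, and composition is the multiplication of the endomorphism algebra End_k(M)). -/
/-! Transport the problem along `e` to `ℕ →₀ M`. There take `z` to be the inclusion into
coordinate `0`, `y` the shift of coordinates `i ↦ i + 1`, and `x` the map that applies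
`s i` on coordinate `i` and sums the results. Then `yⁿ z` is the inclusion into
coordinate `n`, on which `x` applies `s n`. -/

namespace Finsupp

variable {R N P : Type*} [Semiring R] [AddCommMonoid N] [Module R N] [AddCommMonoid P]
  [Module R P]

theorem lmapDomain_succ_pow (n : ℕ) :
    lmapDomain N R Nat.succ ^ n = lmapDomain N R (· + n) := by
  induction n with
  | zero => exact (lmapDomain_id N R).symm
  | succ n ih =>
    rw [pow_succ', Module.End.mul_eq_comp, ih, ← lmapDomain_comp]
    rfl

theorem lsum_comp_lmapDomain_succ_pow_comp_lsingle_zero (s : ℕ → N →ₗ[R] P) (n : ℕ) :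
    lsum ℕ s ∘ₗ (lmapDomain N R Nat.succ ^ n) ∘ₗ lsingle 0 = s n := by
  ext m
  simp [lmapDomain_succ_pow]

end Finsupp

/-- Let `M` be a `k`-module which is `k`-linearly isomorphic to
the direct sum of countably infinitely many copies of itself.  Then for every
sequence `s₀, s₁, …` of `k`-module endomorphisms of `M` there are endomorphisms
`x, y, z` of `M` with `x * yⁿ * z = s n` for all `n` (multiplication in
`End_k(M)` being composition). -/
theorem endomorphisms_xyz
    (k : Type*) [CommRing k] (M : Type*) [AddCommGroup M] [Module k M]
    (e : M ≃ₗ[k] (ℕ →₀ M)) (s : ℕ → Module.End k M) :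
    ∃ x y z : Module.End k M, ∀ n : ℕ, x * y ^ n * z = s n := by
  refine ⟨Finsupp.lsum ℕ s ∘ₗ e, e.symm.conjRingEquiv (Finsupp.lmapDomain M k Nat.succ),
    e.symm ∘ₗ Finsupp.lsingle 0, fun n => ?_⟩
  rw [← map_pow, ← Finsupp.lsum_comp_lmapDomain_succ_pow_comp_lsingle_zero s n]
  ext m
  simp [-map_pow]
end

section
/- Let k be a field, let R be a k-algebra, and let B_1 and B_2 be k-subalgebras of R, each of k-vector-space dimension at most 2, such that R is generated as a k-algebra by B_1 ∪ B_2. Then there is no injective k-algebra homomorphism from the free associative unital k-algebra k⟨x, y⟩ on two generators into R. -/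
open Submodule

private lemma small_subalg {k R : Type*} [Field k] [Ring R] [Algebra k R] [Nontrivial R]
    (B : Subalgebra k R) (h : Module.rank k B ≤ 2) :
    ∃ b ∈ B, ∀ x ∈ B, x ∈ Submodule.span k ({(1 : R), b} : Set R) := by
  have hfin : Module.Finite k B := Module.rank_lt_aleph0_iff.mp
    (lt_of_le_of_lt h (by exact_mod_cast Cardinal.nat_lt_aleph0 2))
  set p : Submodule k B := span k {(1 : B)} with hp
  have h1ne : (1 : B) ≠ 0 := one_ne_zero
  have hq : Module.rank k (B ⧸ p) ≤ 1 := by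
    have e := Submodule.finrank_quotient_add_finrank p
    have hp1 : Module.finrank k p = 1 := finrank_span_singleton h1ne
    have hb2 : Module.finrank k B ≤ 2 := Module.finrank_le_of_rank_le (by exact_mod_cast h)
    have : Module.finrank k (B ⧸ p) ≤ 1 := by omega
    rw [← Module.finrank_eq_rank]
    exact_mod_cast this
  obtain ⟨v₀, hv₀⟩ := rank_le_one_iff.mp hq
  obtain ⟨b', hb'⟩ := Submodule.Quotient.mk_surjective p v₀
  refine ⟨(b' : R), b'.2, fun x hx => ?_⟩
  obtain ⟨r, hr⟩ := hv₀ (Submodule.Quotient.mk ⟨x, hx⟩)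
  rw [← hb', ← Submodule.Quotient.mk_smul, Submodule.Quotient.eq] at hr
  rw [hp, Submodule.mem_span_singleton] at hr
  obtain ⟨s, hs⟩ := hr
  have hxx : (⟨x, hx⟩ : B) = r • b' - s • 1 := by
    rw [eq_sub_iff_add_eq, hs]; abel
  have hx' : x = r • (b' : R) - s • (1 : R) := congrArg Subtype.val hxx
  rw [hx']
  exact sub_mem (smul_mem _ _ (subset_span (by simp))) (smul_mem _ _ (subset_span (by simp)))

private lemma freeMonoid_prod_linearIndependent (k : Type*) [Field k] (X : Type*) :
    LinearIndependent k (fun l : FreeMonoid X => (FreeMonoid.lift (FreeAlgebra.ι k)) l) := by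
  let e : MonoidAlgebra k (FreeMonoid X) ≃ₐ[k] FreeAlgebra k X :=
    (FreeAlgebra.equivMonoidAlgebraFreeMonoid (R := k) (X := X)).symm
  have h0 : LinearIndependent k (fun l : FreeMonoid X =>
      (MonoidAlgebra.of k (FreeMonoid X) l : MonoidAlgebra k (FreeMonoid X))) := by
    exact
      (MonoidAlgebra.basis (FreeMonoid X) k).linearIndependent
  have h1 := h0.map' e.toLinearMap (LinearMap.ker_eq_bot.mpr e.injective)
  convert h1 using 1
  funext l
  show (FreeMonoid.lift (FreeAlgebra.ι k)) l = e (MonoidAlgebra.of k (FreeMonoid X) l)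
  show _ = (FreeAlgebra.equivMonoidAlgebraFreeMonoid (R := k) (X := X)).symm _
  rw [FreeAlgebra.equivMonoidAlgebraFreeMonoid]
  simp [AlgEquiv.ofAlgHom, MonoidAlgebra.lift_of]
  all_goals rfl

private def pqWord {R : Type*} [Ring R] (b c : R) : ℕ → R × R
  | 0 => (1, 1)
  | n + 1 => (b * (pqWord b c n).2, c * (pqWord b c n).1)

private lemma exists_pow_big (N : ℕ) : ∃ n : ℕ, 2 * (N * n + 1) < 2 ^ n := by
  refine ⟨4 * (N + 2), ?_⟩
  have h1 : N + 2 < 2 ^ (N + 2) := Nat.lt_two_pow_self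
  have h2 : 4 ≤ 2 ^ (N + 2) := by
    calc (4:ℕ) = 2 ^ 2 := rfl
    _ ≤ 2 ^ (N + 2) := Nat.pow_le_pow_right (by norm_num) (by omega)
  have h3 : 2 ^ (4 * (N + 2)) = (2 ^ (N + 2)) ^ 4 := by
    rw [← pow_mul, Nat.mul_comm]
  rw [h3]
  set t := 2 ^ (N + 2) with ht
  have htt : 16 ≤ t * t := Nat.mul_le_mul h2 h2
  calc 2 * (N * (4 * (N + 2)) + 1) = 8 * (N * (N + 2)) + 2 := by ring
    _ ≤ 8 * (t * t) + 2 := by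
        have hx : N * (N + 2) ≤ t * t := Nat.mul_le_mul (by omega) h1.le
        omega
    _ < 16 * (t * t) := by omega
    _ ≤ (t * t) * (t * t) := Nat.mul_le_mul_right _ htt
    _ = t ^ 4 := by ring

/-- Let `k` be a field and `R` a `k`-algebra generated by the union
of two `k`-subalgebras `B₁`, `B₂`, each of `k`-dimension at most `2`.  Then there is
no injective `k`-algebra homomorphism from the free associative unital `k`-algebra on
two generators into `R`. -/
theorem no_free_algebra_in_two_small_subalgebras
    (k : Type*) [Field k] (R : Type*) [Ring R] [Algebra k R]
    (B₁ B₂ : Subalgebra k R)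
    (h₁ : Module.rank k B₁ ≤ 2) (h₂ : Module.rank k B₂ ≤ 2)
    (hgen : Algebra.adjoin k ((B₁ : Set R) ∪ (B₂ : Set R)) = ⊤) :
    ¬ ∃ f : FreeAlgebra k (Fin 2) →ₐ[k] R, Function.Injective f := by
  rintro ⟨f, hf⟩
  rcases subsingleton_or_nontrivial R with hR | hR
  · exact one_ne_zero (hf (Subsingleton.elim (f 1) (f 0)))
  classical
  obtain ⟨b, hbB, hb⟩ := small_subalg B₁ h₁
  obtain ⟨c, hcB, hc⟩ := small_subalg B₂ h₂
  set P : ℕ → R := fun n => (pqWord b c n).1 with hPdef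
  set Q : ℕ → R := fun n => (pqWord b c n).2 with hQdef
  have hP0 : P 0 = 1 := rfl
  have hQ0 : Q 0 = 1 := rfl
  have hPsucc : ∀ n, P (n + 1) = b * Q n := fun n => rfl
  have hQsucc : ∀ n, Q (n + 1) = c * P n := fun n => rfl
  set T : ℕ → Finset R :=
    fun n => (Finset.range (n + 1)).image P ∪ (Finset.range (n + 1)).image Q with hTdef
  set V : ℕ → Submodule k R := fun n => Submodule.span k (T n : Set R) with hVdef
  have hPmem : ∀ i n, i ≤ n → P i ∈ V n := by
    intro i n h
    exact subset_span (by
      simp only [hTdef, Finset.coe_union, Set.mem_union, Finset.coe_image, Set.mem_image,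
        Finset.mem_coe, Finset.mem_range]
      exact Or.inl ⟨i, by omega, rfl⟩)
  have hQmem : ∀ i n, i ≤ n → Q i ∈ V n := by
    intro i n h
    exact subset_span (by
      simp only [hTdef, Finset.coe_union, Set.mem_union, Finset.coe_image, Set.mem_image,
        Finset.mem_coe, Finset.mem_range]
      exact Or.inr ⟨i, by omega, rfl⟩)
  have hmono : ∀ {m n : ℕ}, m ≤ n → V m ≤ V n := by
    intro m n hmn
    apply span_mono
    intro x hx
    simp only [hTdef, Finset.coe_union, Set.mem_union, Finset.coe_image, Set.mem_image,
      Finset.mem_coe, Finset.mem_range] at hx ⊢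
    rcases hx with ⟨i, hi, rfl⟩ | ⟨i, hi, rfl⟩
    · exact Or.inl ⟨i, by omega, rfl⟩
    · exact Or.inr ⟨i, by omega, rfl⟩
  -- multiplication by b and c raises the filtration by one
  have hbmul : ∀ n x, x ∈ V n → b * x ∈ V (n + 1) := by
    intro n x hx
    induction hx using Submodule.span_induction with
    | mem x hx =>
      simp only [hTdef, Finset.coe_union, Set.mem_union, Finset.coe_image, Set.mem_image,
        Finset.mem_coe, Finset.mem_range] at hx
      rcases hx with ⟨i, hi, rfl⟩ | ⟨i, hi, rfl⟩
      · rcases i with _ | j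
        · rw [hP0, mul_one, show b = P 1 from (by rw [hPsucc, hQ0, mul_one])]
          exact hPmem 1 (n + 1) (by omega)
        · rw [hPsucc j, ← mul_assoc]
          obtain ⟨s, t, hst⟩ := mem_span_pair.mp (hb (b * b) (mul_mem hbB hbB))
          rw [← hst, add_mul, smul_mul_assoc, smul_mul_assoc, one_mul, ← hPsucc j]
          exact add_mem (smul_mem _ _ (hQmem j (n+1) (by omega)))
            (smul_mem _ _ (hPmem (j+1) (n+1) (by omega)))
      · rw [← hPsucc i]
        exact hPmem (i + 1) (n + 1) (by omega)
    | zero => rw [mul_zero]; exact zero_mem _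
    | add x y hx hy ihx ihy => rw [mul_add]; exact add_mem ihx ihy
    | smul a x hx ih => rw [mul_smul_comm]; exact smul_mem _ _ ih
  have hcmul : ∀ n x, x ∈ V n → c * x ∈ V (n + 1) := by
    intro n x hx
    induction hx using Submodule.span_induction with
    | mem x hx =>
      simp only [hTdef, Finset.coe_union, Set.mem_union, Finset.coe_image, Set.mem_image,
        Finset.mem_coe, Finset.mem_range] at hx
      rcases hx with ⟨i, hi, rfl⟩ | ⟨i, hi, rfl⟩
      · rw [← hQsucc i]
        exact hQmem (i + 1) (n + 1) (by omega)
      · rcases i with _ | j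
        · rw [hQ0, mul_one, show c = Q 1 from (by rw [hQsucc, hP0, mul_one])]
          exact hQmem 1 (n + 1) (by omega)
        · rw [hQsucc j, ← mul_assoc]
          obtain ⟨s, t, hst⟩ := mem_span_pair.mp (hc (c * c) (mul_mem hcB hcB))
          rw [← hst, add_mul, smul_mul_assoc, smul_mul_assoc, one_mul, ← hQsucc j]
          exact add_mem (smul_mem _ _ (hPmem j (n+1) (by omega)))
            (smul_mem _ _ (hQmem (j+1) (n+1) (by omega)))
    | zero => rw [mul_zero]; exact zero_mem _
    | add x y hx hy ihx ihy => rw [mul_add]; exact add_mem ihx ihy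
    | smul a x hx ih => rw [mul_smul_comm]; exact smul_mem _ _ ih
  -- words multiply filtration additively
  have hword : ∀ i n y, y ∈ V n → P i * y ∈ V (i + n) ∧ Q i * y ∈ V (i + n) := by
    intro i
    induction i with
    | zero => intro n y hy; rw [Nat.zero_add, hP0, hQ0, one_mul]; exact ⟨hy, hy⟩
    | succ j ih =>
      intro n y hy
      constructor
      · rw [hPsucc, mul_assoc]
        have := hbmul (j + n) _ (ih n y hy).2
        rwa [show j + n + 1 = j + 1 + n by omega] at this
      · rw [hQsucc, mul_assoc]
        have := hcmul (j + n) _ (ih n y hy).1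
        rwa [show j + n + 1 = j + 1 + n by omega] at this
  have hmul : ∀ m x, x ∈ V m → ∀ n y, y ∈ V n → x * y ∈ V (m + n) := by
    intro m x hx
    induction hx using Submodule.span_induction with
    | mem x hx =>
      intro n y hy
      simp only [hTdef, Finset.coe_union, Set.mem_union, Finset.coe_image, Set.mem_image,
        Finset.mem_coe, Finset.mem_range] at hx
      rcases hx with ⟨i, hi, rfl⟩ | ⟨i, hi, rfl⟩
      · exact hmono (by omega) (hword i n y hy).1
      · exact hmono (by omega) (hword i n y hy).2
    | zero => intro n y hy; rw [zero_mul]; exact zero_mem _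
    | add x y hx hy ihx ihy =>
      intro n z hz; rw [add_mul]; exact add_mem (ihx n z hz) (ihy n z hz)
    | smul a x hx ih => intro n z hz; rw [smul_mul_assoc]; exact smul_mem _ _ (ih n z hz)
  have hone : (1 : R) ∈ V 0 := hP0 ▸ hPmem 0 0 le_rfl
  -- everything lies in some V n
  have hA : ∀ x : R, ∃ n, x ∈ V n := by
    intro x
    have hx : x ∈ Algebra.adjoin k ((B₁ : Set R) ∪ (B₂ : Set R)) := hgen ▸ trivial
    induction hx using Algebra.adjoin_induction with
    | mem z hz =>
      refine ⟨1, ?_⟩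
      rcases hz with hz | hz
      · refine span_le.mpr ?_ (hb z hz)
        intro w hw
        simp only [Set.mem_insert_iff, Set.mem_singleton_iff] at hw
        rcases hw with hw | hw
        · rw [hw]; exact hmono (by omega) hone
        · rw [hw, show b = P 1 from (by rw [hPsucc, hQ0, mul_one])]
          exact hPmem 1 1 le_rfl
      · refine span_le.mpr ?_ (hc z hz)
        intro w hw
        simp only [Set.mem_insert_iff, Set.mem_singleton_iff] at hw
        rcases hw with hw | hw
        · rw [hw]; exact hmono (by omega) hone
        · rw [hw, show c = Q 1 from (by rw [hQsucc, hP0, mul_one])]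
          exact hQmem 1 1 le_rfl
    | algebraMap r =>
      exact ⟨0, by rw [Algebra.algebraMap_eq_smul_one]; exact smul_mem _ _ hone⟩
    | add x y hx hy ihx ihy =>
      obtain ⟨m, hm⟩ := ihx; obtain ⟨n, hn⟩ := ihy
      exact ⟨max m n, add_mem (hmono (le_max_left m n) hm) (hmono (le_max_right m n) hn)⟩
    | mul x y hx hy ihx ihy =>
      obtain ⟨m, hm⟩ := ihx; obtain ⟨n, hn⟩ := ihy
      exact ⟨m + n, hmul m x hm n y hn⟩
  -- the images of the generators
  set g : Fin 2 → R := fun i => f (FreeAlgebra.ι k i) with hgdef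
  obtain ⟨N₀, hN₀⟩ := hA (g 0)
  obtain ⟨N₁, hN₁⟩ := hA (g 1)
  set N := max N₀ N₁ with hNdef
  have hgmem : ∀ i, g i ∈ V N := by
    intro i
    fin_cases i
    · exact hmono (le_max_left _ _) hN₀
    · exact hmono (le_max_right _ _) hN₁
  have hlist : ∀ l : List (Fin 2), (l.map g).prod ∈ V (N * l.length) := by
    intro l
    induction l with
    | nil => simpa using hone
    | cons a l ih =>
      rw [List.map_cons, List.prod_cons]
      have := hmul N (g a) (hgmem a) _ _ ih
      rwa [show N + N * l.length = N * (a :: l).length by simp [List.length_cons]; ring] at this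
  obtain ⟨n, hn⟩ := exists_pow_big N
  -- linearly independent family of size 2^n inside V (N * n)
  set v : List.Vector (Fin 2) n → R :=
    fun l => f ((FreeMonoid.lift (FreeAlgebra.ι k)) (FreeMonoid.ofList l.toList)) with hvdef
  have hinj : Function.Injective
      (fun l : List.Vector (Fin 2) n => FreeMonoid.ofList l.toList) := by
    intro a b hab
    have h2 := congrArg FreeMonoid.toList hab
    exact List.Vector.toList_injective (by simpa [FreeMonoid.toList_ofList] using h2)
  have hli : LinearIndependent k v := by
    have h0 := (freeMonoid_prod_linearIndependent k (Fin 2)).comp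
      (fun l : List.Vector (Fin 2) n => FreeMonoid.ofList l.toList) hinj
    exact h0.map' f.toLinearMap (LinearMap.ker_eq_bot.mpr hf)
  have hrange : ∀ l, v l ∈ V (N * n) := by
    intro l
    have h1 : (FreeMonoid.lift (FreeAlgebra.ι k)) (FreeMonoid.ofList l.toList)
        = (l.toList.map (FreeAlgebra.ι k)).prod := by
      rw [FreeMonoid.lift_apply, FreeMonoid.toList_ofList]
    rw [hvdef]
    simp only [h1, map_list_prod, List.map_map]
    have := hlist (l.toList)
    rwa [List.Vector.toList_length] at this
  -- cardinality contradiction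
  have hcard : (2 : ℕ) ^ n ≤ 2 * (N * n + 1) := by
    set v' : List.Vector (Fin 2) n → V (N * n) := fun l => ⟨v l, hrange l⟩ with hv'def
    have hli' : LinearIndependent k v' :=
      LinearIndependent.of_comp (V (N * n)).subtype hli
    have hli'' : LinearIndependent k (fun l : ULift (List.Vector (Fin 2) n) => v' l.down) :=
      hli'.comp ULift.down ULift.down_injective
    have c1 := hli''.cardinal_le_rank
    have c2 : Module.rank k (V (N * n)) ≤ ((T (N * n)).card : Cardinal) := by
      have h := rank_span_le (R := k) (((T (N * n)) : Finset R) : Set R)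
      simpa using h
    have c3 : (T (N * n)).card ≤ 2 * (N * n + 1) := by
      refine le_trans (Finset.card_union_le _ _) ?_
      have cA := Finset.card_image_le (s := Finset.range (N * n + 1)) (f := P)
      have cB := Finset.card_image_le (s := Finset.range (N * n + 1)) (f := Q)
      simp only [Finset.card_range] at cA cB
      omega
    have big := c1.trans (c2.trans (show ((T (N * n)).card : Cardinal) ≤
        ((2 * (N * n + 1) : ℕ) : Cardinal) from by exact_mod_cast c3))
    have c4 : Cardinal.mk (ULift (List.Vector (Fin 2) n)) = (((2 : ℕ) ^ n : ℕ) : Cardinal) := by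
      rw [Cardinal.mk_fintype]
      simp [card_vector]
    rw [c4] at big
    exact_mod_cast big
  omega
end
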